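/- arXiv:2504.02795 — 10 statements merged into one kernel-verified Lean document; each statement's English description precedes it below -/
import Mathlib

section
/- For every integer d > 2, the greedy partition γ_d of the positive integers contains a part of size strictly less than d. -/
/-- `greedyPrim d n` is the smallest element (the "primitive") of the part of the
greedy partition `γ_d` containing `n` (and `0` for `n = 0`).  A positive integer `n`
joins the part headed by the least `k` such that `n = m·k` with `m ≤ d` and the part
headed by `k` currently equals `{k, 2k, …, (m-1)k}`; `k = n` always qualifies, starting
a new part. -/
noncomputable def greedyPrim (d : ℕ) : ℕ → ℕ := fun n =>
  Nat.strongRecOn n (fun n ih =>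
    if n = 0 then 0 else
    sInf {k | 0 < k ∧ k ∣ n ∧ n / k ≤ d ∧
      ∀ m, ∀ hm : m < n, (k ≤ m → k ∣ m → ih m hm = k)})

/-- The part of the greedy partition `γ_d` headed by the primitive `k`. -/
def greedyPart (d : ℕ) (k : ℕ) : Set ℕ := {m | greedyPrim d m = k}

private def gpCand (d n : ℕ) : Set ℕ :=
  {k | 0 < k ∧ k ∣ n ∧ n / k ≤ d ∧
      ∀ m, m < n → k ≤ m → k ∣ m → greedyPrim d m = k}

private lemma greedyPrim_eq (d n : ℕ) :
    greedyPrim d n = if n = 0 then 0 else sInf (gpCand d n) := by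
  conv_lhs => rw [greedyPrim]
  rw [Nat.strongRecOn, WellFounded.fix_eq]
  rfl

private lemma self_mem_gpCand {d n : ℕ} (hd : 0 < d) (hn : 0 < n) : n ∈ gpCand d n := by
  refine ⟨hn, dvd_refl n, ?_, fun m hm h1 _ => absurd hm (by omega)⟩
  rw [Nat.div_self hn]; exact hd

private lemma greedyPrim_mem {d n : ℕ} (hd : 0 < d) (hn : 0 < n) :
    greedyPrim d n ∈ gpCand d n := by
  rw [greedyPrim_eq, if_neg hn.ne']
  exact Nat.sInf_mem ⟨n, self_mem_gpCand hd hn⟩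

private lemma greedyPrim_le {d n k : ℕ} (hk : k ∈ gpCand d n) (hn : 0 < n) :
    greedyPrim d n ≤ k := by
  rw [greedyPrim_eq, if_neg hn.ne']
  exact Nat.sInf_le hk

private lemma greedyPrim_one {d : ℕ} (hd : 0 < d) :
    ∀ n, 0 < n → n ≤ d → greedyPrim d n = 1 := by
  intro n
  induction n using Nat.strong_induction_on with
  | _ n IH =>
    intro hn hnd
    have h1 : (1 : ℕ) ∈ gpCand d n := by
      refine ⟨one_pos, one_dvd n, by simpa using hnd, fun m hm h1 _ => ?_⟩
      exact IH m hm h1 (le_trans (le_of_lt hm) hnd)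
    have := greedyPrim_le h1 hn
    have := (greedyPrim_mem hd hn).1
    omega

private lemma greedyPrim_id {d n : ℕ} (hd : 2 < d) (h1 : d < n) (h2 : n ≤ 2 * d + 1) :
    greedyPrim d n = n := by
  have hd0 : 0 < d := by omega
  have hn : 0 < n := by omega
  obtain ⟨hp0, hpdvd, hpq, hpall⟩ := greedyPrim_mem hd0 hn
  set p := greedyPrim d n with hp
  have hple : p ≤ n := Nat.le_of_dvd hn hpdvd
  rcases eq_or_lt_of_le hple with h | h
  · exact h
  · exfalso
    -- p < n, p ∣ n so 2p ≤ n, hence p ≤ d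
    obtain ⟨q, hq⟩ := hpdvd
    have hq2 : 2 ≤ q := by
      rcases Nat.lt_or_ge q 2 with hq1 | hq1
      · interval_cases q <;> omega
      · exact hq1
    have hpd : p ≤ d := by nlinarith
    -- p ≥ 2 : if p = 1 then n / p = n ≤ d, contradiction
    have hp2 : 2 ≤ p := by
      rcases Nat.lt_or_ge p 2 with hp1 | hp1
      · have : p = 1 := by omega
        rw [this] at hpq
        simp at hpq
        omega
      · exact hp1
    have heq : greedyPrim d p = p := hpall p h le_rfl (dvd_refl p)
    have := greedyPrim_one hd0 p hp0 hpd
    omega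

/-- For every `d > 2`, some part of the greedy partition `γ_d` has size strictly
less than `d`. -/
theorem greedy_partition_has_small_part (d : ℕ) (hd : 2 < d) :
    ∃ k, 0 < k ∧ greedyPrim d k = k ∧ (greedyPart d k).ncard < d := by
  by_contra h
  push_neg at h
  have hd0 : 0 < d := by omega
  -- fullness: every primitive's part is all of {k,...,dk}
  have full : ∀ k, 0 < k → greedyPrim d k = k →
      ∀ j, 1 ≤ j → j ≤ d → greedyPrim d (j * k) = k := by
    intro k hk hkk
    have hcard := h k hk hkk
    set S : Finset ℕ := (Finset.Icc 1 d).image (· * k) with hS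
    have hinj : Function.Injective (· * k) := fun a b hab =>
      Nat.eq_of_mul_eq_mul_right hk hab
    have hScard : S.card = d := by
      rw [hS, Finset.card_image_of_injective _ hinj, Nat.card_Icc]
      omega
    have hsub : greedyPart d k ⊆ ↑S := by
      intro m hm
      have hmk : greedyPrim d m = k := hm
      have hm0 : 0 < m := by
        rcases Nat.eq_zero_or_pos m with rfl | hm0
        · rw [greedyPrim_eq] at hmk; simp at hmk; omega
        · exact hm0
      obtain ⟨_, hdvd, hq, _⟩ := greedyPrim_mem hd0 hm0
      rw [hmk] at hdvd hq
      simp only [hS, Finset.coe_image, Set.mem_image, Finset.mem_coe, Finset.mem_Icc]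
      refine ⟨m / k, ⟨Nat.one_le_div_iff hk |>.mpr (Nat.le_of_dvd hm0 hdvd), hq⟩, ?_⟩
      exact Nat.div_mul_cancel hdvd
    have hle : (↑S : Set ℕ).ncard ≤ (greedyPart d k).ncard := by
      rw [Set.ncard_coe_finset, hScard]; exact hcard
    have heq : greedyPart d k = ↑S := Set.eq_of_subset_of_ncard_le hsub hle (S.finite_toSet)
    intro j hj1 hjd
    have : j * k ∈ (↑S : Set ℕ) := by
      simp only [hS, Finset.coe_image, Set.mem_image, Finset.mem_coe, Finset.mem_Icc]
      exact ⟨j, ⟨hj1, hjd⟩, rfl⟩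
    rw [← heq] at this
    exact this
  -- the contradiction
  set s : ℕ := d / 2 + 1 with hs
  have hs0 : 0 < s := by omega
  have h2s : greedyPrim d (2 * s) = 2 * s := greedyPrim_id hd (by omega) (by omega)
  have h3s : greedyPrim d (3 * s) = 3 * s := greedyPrim_id hd (by omega) (by omega)
  have e1 : greedyPrim d (3 * (2 * s)) = 2 * s :=
    full (2 * s) (by omega) h2s 3 (by omega) (by omega)
  have e2 : greedyPrim d (2 * (3 * s)) = 3 * s :=
    full (3 * s) (by omega) h3s 2 (by omega) (by omega)
  have : 3 * (2 * s) = 2 * (3 * s) := by ring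
  rw [this] at e1
  omega
end

section
/- For every integer d ≥ 3, there is no subset M of the positive integers such that the sets M, 2M, 3M, ..., dM are pairwise disjoint and their union is all of the positive integers. (Equivalently: there is no partition of the positive integers into parts of the form {m, 2m, ..., dm}, all of size exactly d.) -/
/-- For `d ≥ 3` there is no subset `M` of the positive integers such that
`M, 2M, …, dM` are pairwise disjoint with union all of `ℕ+`. -/
theorem no_equal_size_partition (d : ℕ) (hd : 3 ≤ d) :
    ¬ ∃ M : Set ℕ, M ⊆ {n | 0 < n} ∧
      (∀ k ∈ Finset.Icc 1 d, ∀ l ∈ Finset.Icc 1 d, k ≠ l →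
        Disjoint ((k * ·) '' M) ((l * ·) '' M)) ∧
      (⋃ k ∈ Finset.Icc 1 d, (k * ·) '' M) = {n | 0 < n} := by
  rintro ⟨M, hpos, hdisj, hcov⟩
  -- covering: every positive n is k*m for some 1 ≤ k ≤ d, m ∈ M
  have cover : ∀ n : ℕ, 0 < n → ∃ k, 1 ≤ k ∧ k ≤ d ∧ ∃ m ∈ M, k * m = n := by
    intro n hn
    have : n ∈ (⋃ k ∈ Finset.Icc 1 d, (k * ·) '' M) := by rw [hcov]; exact hn
    simp only [Set.mem_iUnion, Finset.mem_Icc, Set.mem_image] at this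
    obtain ⟨k, ⟨hk1, hk2⟩, m, hm, hkm⟩ := this
    exact ⟨k, hk1, hk2, m, hm, hkm⟩
  -- disjointness in element form
  have disj : ∀ k l : ℕ, 1 ≤ k → k ≤ d → 1 ≤ l → l ≤ d → k ≠ l →
      ∀ a ∈ M, ∀ b ∈ M, k * a ≠ l * b := by
    intro k l hk1 hk2 hl1 hl2 hkl a ha b hb hab
    have := hdisj k (Finset.mem_Icc.mpr ⟨hk1, hk2⟩) l (Finset.mem_Icc.mpr ⟨hl1, hl2⟩) hkl
    exact (Set.disjoint_left.mp this ⟨a, ha, rfl⟩) ⟨b, hb, hab.symm⟩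
  -- if 2 ≤ k ≤ d and x ∈ M then k*x ∉ M
  have notM : ∀ k : ℕ, 2 ≤ k → k ≤ d → ∀ x ∈ M, k * x ∉ M := by
    intro k hk2 hkd x hx hkx
    exact disj 1 k le_rfl (by omega) (by omega) hkd (by omega) (k * x) hkx x hx (by ring)
  -- choose prime p with d/2 < p ≤ d (so 2p > d)
  obtain ⟨p, hp, hplt, hple⟩ := Nat.exists_prime_lt_and_le_two_mul (d / 2) (by omega)
  have hpd : p ≤ d := hple.trans (by omega)
  have h2p : d < 2 * p := by omega
  have hppos : 0 < p := hp.pos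
  -- choose a big prime P
  obtain ⟨P, hPge, hP⟩ := Nat.exists_infinite_primes (6 * p * d + 1)
  have hPd : d < P := by nlinarith [hp.two_le]
  have hPpos : 0 < P := hP.pos
  -- general fact: if 1 ≤ k ≤ d and k * m = n * P, then k ∣ n
  have kdvd : ∀ k n m : ℕ, 1 ≤ k → k ≤ d → k * m = n * P → k ∣ n := by
    intro k n m hk1 hkd hkm
    have hk : k ∣ n * P := ⟨m, hkm.symm⟩
    have hcop : Nat.Coprime k P := by
      rw [Nat.coprime_comm]
      exact (Nat.Prime.coprime_iff_not_dvd hP).mpr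
        (fun h => by have := Nat.le_of_dvd (by omega) h; omega)
    exact (Nat.Coprime.dvd_of_dvd_mul_right hcop) hk
  -- P ∈ M
  have hPM : P ∈ M := by
    obtain ⟨k, hk1, hkd, m, hm, hkm⟩ := cover P hPpos
    have hk : k ∣ 1 := by
      have := kdvd k 1 m hk1 hkd (by omega)
      exact this
    have : k = 1 := Nat.dvd_one.mp hk
    subst this
    rw [one_mul] at hkm; rwa [hkm] at hm
  -- kP ∉ M for 2 ≤ k ≤ d
  have hkPM : ∀ k : ℕ, 2 ≤ k → k ≤ d → k * P ∉ M := fun k h2 hkd => notM k h2 hkd P hPM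
  -- key: for c ∈ {2,3}, c*p*P ∈ M
  have key : ∀ c : ℕ, 2 ≤ c → c ≤ 3 → c.Prime → c * p * P ∈ M := by
    intro c hc2 hc3 hcp
    have hcd : c ≤ d := by omega
    obtain ⟨k, hk1, hkd, m, hm, hkm⟩ := cover (c * p * P) (by positivity)
    have hkcp : k ∣ c * p := kdvd k (c * p) m hk1 hkd (by linarith [hkm])
    -- k ∈ {1, c, p} essentially
    by_cases hpk : p ∣ k
    · -- then k = p
      obtain ⟨j, hj⟩ := hpk
      have hjcp : p * j ∣ c * p := hj ▸ hkcp
      have hkp : k = p := by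
        rcases Nat.lt_or_ge j 2 with hj2 | hj2
        · interval_cases j <;> omega
        · exfalso
          have : p * 2 ≤ p * j := Nat.mul_le_mul_left p hj2
          have : p * j ≤ d := hj ▸ hkd
          omega
      -- m = c * P, which is not in M
      have hmval : m = c * P := by
        rw [hkp] at hkm
        have : p * m = p * (c * P) := by rw [hkm]; ring
        exact Nat.eq_of_mul_eq_mul_left hppos this
      exact absurd (hmval ▸ hm) (hkPM c hc2 hcd)
    · -- k coprime to p, so k ∣ c, so k = 1 or k = c
      have hcop : Nat.Coprime k p := by
        rw [Nat.coprime_comm]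
        exact (Nat.Prime.coprime_iff_not_dvd hp).mpr hpk
      have hkc : k ∣ c := (Nat.Coprime.dvd_of_dvd_mul_right hcop) hkcp
      rcases (Nat.Prime.eq_one_or_self_of_dvd hcp k hkc) with h1 | hc
      · subst h1; rw [one_mul] at hkm; rwa [hkm] at hm
      · subst hc
        -- m = p * P, not in M since p*P ∈ pM and p ≥ 2
        have hmval : m = p * P := by
          have : k * m = k * (p * P) := by rw [hkm]; ring
          exact Nat.eq_of_mul_eq_mul_left (by omega) this
        exact absurd (hmval ▸ hm) (hkPM p hp.two_le hpd)
  have h2M : 2 * p * P ∈ M := key 2 le_rfl (by omega) Nat.prime_two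
  have h3M : 3 * p * P ∈ M := key 3 (by omega) le_rfl Nat.prime_three
  -- 6pP ∈ 2M ∩ 3M : contradiction
  exact disj 2 3 (by omega) (by omega) (by omega) hd (by omega)
    (3 * p * P) h3M (2 * p * P) h2M (by ring)
end

section
/- The set M = {n ∈ ℕ+ : val_2(n) is even} is the unique subset M of the positive integers such that M and 2M are disjoint and M ∪ 2M = ℕ+. (Equivalently, the ternary convolution is the only homogeneous bounded regular convolution in which every part of the associated partition of ℕ+ has size exactly 2.) -/
lemma v2_double (m : ℕ) (hm : m ≠ 0) :
    padicValNat 2 (2 * m) = padicValNat 2 m + 1 := by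
  rw [padicValNat.mul (by norm_num) hm, padicValNat.self (by norm_num)]
  omega

/-- `M = {n ∈ ℕ+ : val₂(n) even}` is the unique subset of the positive integers
with `M` and `2M` disjoint and `M ∪ 2M = ℕ+`. -/
theorem ternary_unique (M : Set ℕ) :
    (M ⊆ {n | 0 < n} ∧ Disjoint M ((2 * ·) '' M) ∧ M ∪ (2 * ·) '' M = {n | 0 < n}) ↔
      M = {n | 0 < n ∧ Even (padicValNat 2 n)} := by
  constructor
  · rintro ⟨hpos, hdisj, hunion⟩
    ext n
    simp only [Set.mem_setOf_eq]
    induction n using Nat.strong_induction_on with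
    | _ n ih =>
      constructor
      · intro hn
        have hn0 : 0 < n := hpos hn
        refine ⟨hn0, ?_⟩
        rcases Nat.even_or_odd n with he | ho
        · obtain ⟨m, hm⟩ := he
          have hm' : n = 2 * m := by omega
          have hm0 : 0 < m := by omega
          have hmnot : m ∉ M := by
            intro hmM
            exact hdisj.ne_of_mem hn ⟨m, hmM, hm'.symm⟩ rfl
          have hne : ¬ Even (padicValNat 2 m) := fun h =>
            hmnot ((ih m (by omega)).2 ⟨hm0, h⟩)
          rw [hm', v2_double m (by omega), Nat.even_add_one]
          exact hne
        · have : padicValNat 2 n = 0 :=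
            padicValNat.eq_zero_of_not_dvd (by
              intro h; exact (Nat.not_even_iff_odd.2 ho) (even_iff_two_dvd.2 h))
          simp [this]
      · rintro ⟨hn0, heven⟩
        have hn : n ∈ M ∪ (2 * ·) '' M := hunion ▸ hn0
        rcases hn with h | ⟨m, hmM, hm⟩
        · exact h
        · exfalso
          replace hm : 2 * m = n := hm
          have hm0 : 0 < m := hpos hmM
          have : Even (padicValNat 2 m) := ((ih m (by omega)).1 hmM).2
          rw [← hm, v2_double m (by omega), Nat.even_add_one] at heven
          exact heven this
  · rintro rfl
    refine ⟨fun n hn => hn.1, ?_, ?_⟩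
    · rw [Set.disjoint_left]
      rintro n ⟨hn0, heven⟩ ⟨m, ⟨hm0, hmev⟩, hm⟩
      replace hm : 2 * m = n := hm
      rw [← hm, v2_double m (by omega), Nat.even_add_one] at heven
      exact heven hmev
    · ext n
      simp only [Set.mem_union, Set.mem_image, Set.mem_setOf_eq]
      constructor
      · rintro (⟨h, _⟩ | ⟨m, ⟨hm0, _⟩, hm⟩)
        · exact h
        · replace hm : 2 * m = n := hm; omega
      · intro hn0
        by_cases h : Even (padicValNat 2 n)
        · exact Or.inl ⟨hn0, h⟩
        · right
          have hv : padicValNat 2 n ≠ 0 := fun h0 => h (h0 ▸ Even.zero)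
          have hdvd : 2 ∣ n := by
            by_contra hd
            exact hv (padicValNat.eq_zero_of_not_dvd hd)
          obtain ⟨m, hm⟩ := hdvd
          have hm0 : 0 < m := by omega
          refine ⟨m, ⟨hm0, ?_⟩, hm.symm⟩
          rw [hm, v2_double m (by omega), Nat.even_add_one] at h
          exact not_not.1 h
end

section
/- Let (s_i)_{i=0}^∞ be a sequence of positive integers with s_{i+1} − s_i > 1 for all i, let p be a prime, let S be the image of the sequence, and put T = {n ∈ ℕ+ : val_p(n) ∈ S}. Then T has natural density equal to the (convergent) sum Σ_{k=0}^∞ (p^{−s_k} − p^{−s_k−1}). -/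
open Filter Finset

/-- `S ⊆ ℕ+` has natural (asymptotic) density `c`:
`#{s ∈ S : 1 ≤ s ≤ N} / N → c` as `N → ∞`. -/
def hasDensity (S : Set ℕ) (c : ℝ) : Prop :=
  Filter.Tendsto (fun N : ℕ => ((S ∩ Set.Icc 1 N).ncard : ℝ) / N)
    Filter.atTop (nhds c)

private lemma card_val_eq (p : ℕ) (hp : p.Prime) (m N : ℕ) :
    ((Finset.Ioc 0 N).filter (fun n => padicValNat p n = m)).card
      = N / p ^ m - N / p ^ (m + 1) := by
  haveI : Fact p.Prime := ⟨hp⟩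
  have hsub : (Finset.Ioc 0 N).filter (fun n => p ^ (m + 1) ∣ n)
      ⊆ (Finset.Ioc 0 N).filter (fun n => p ^ m ∣ n) := by
    intro n hn
    rw [Finset.mem_filter] at hn ⊢
    exact ⟨hn.1, (pow_dvd_pow p (Nat.le_succ m)).trans hn.2⟩
  have h1 : (Finset.Ioc 0 N).filter (fun n => padicValNat p n = m)
      = (Finset.Ioc 0 N).filter (fun n => p ^ m ∣ n)
        \ (Finset.Ioc 0 N).filter (fun n => p ^ (m + 1) ∣ n) := by
    ext n
    simp only [Finset.mem_sdiff, Finset.mem_filter, Finset.mem_Ioc]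
    constructor
    · rintro ⟨⟨h0, hN⟩, hv⟩
      have hne : n ≠ 0 := h0.ne'
      refine ⟨⟨⟨h0, hN⟩, ?_⟩, ?_⟩
      · rw [padicValNat_dvd_iff_le hne, hv]
      · rintro ⟨-, hd⟩
        rw [padicValNat_dvd_iff_le hne, hv] at hd
        omega
    · rintro ⟨⟨⟨h0, hN⟩, hd⟩, hnd⟩
      have hne : n ≠ 0 := h0.ne'
      rw [padicValNat_dvd_iff_le hne] at hd
      refine ⟨⟨h0, hN⟩, ?_⟩
      by_contra hne2
      have : m + 1 ≤ padicValNat p n := by omega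
      exact hnd ⟨⟨h0, hN⟩, (padicValNat_dvd_iff_le hne).2 this⟩
  rw [h1, Finset.card_sdiff_of_subset hsub, Nat.Ioc_filter_dvd_card_eq_div,
    Nat.Ioc_filter_dvd_card_eq_div]

private lemma count_eq (p : ℕ) (hp : p.Prime) (s : ℕ → ℕ) (hmono : StrictMono s) (N : ℕ) :
    ({n | 0 < n ∧ padicValNat p n ∈ Set.range s} ∩ Set.Icc 1 N).ncard
      = ∑ k ∈ Finset.range N, (N / p ^ (s k) - N / p ^ (s k + 1)) := by
  classical
  have hset : {n | 0 < n ∧ padicValNat p n ∈ Set.range s} ∩ Set.Icc 1 N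
      = ↑((Finset.Ioc 0 N).filter (fun n => padicValNat p n ∈ Set.range s)) := by
    ext n
    simp only [Set.mem_inter_iff, Set.mem_setOf_eq, Set.mem_Icc, Finset.coe_filter,
      Finset.mem_Ioc]
    constructor
    · rintro ⟨⟨h0, hv⟩, h1, hN⟩; exact ⟨⟨h0, hN⟩, hv⟩
    · rintro ⟨⟨h0, hN⟩, hv⟩; exact ⟨⟨h0, hv⟩, h0, hN⟩
  rw [hset, Set.ncard_coe_finset]
  have hsplit : (Finset.Ioc 0 N).filter (fun n => padicValNat p n ∈ Set.range s)
      = (Finset.range N).biUnion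
          (fun k => (Finset.Ioc 0 N).filter (fun n => padicValNat p n = s k)) := by
    ext n
    simp only [Finset.mem_filter, Finset.mem_biUnion, Finset.mem_range, Finset.mem_Ioc,
      Set.mem_range]
    constructor
    · rintro ⟨⟨h0, hN⟩, k, hk⟩
      refine ⟨k, ?_, ⟨h0, hN⟩, hk.symm⟩
      have hd : p ^ (s k) ∣ n := by rw [hk]; exact pow_padicValNat_dvd
      have h1 : p ^ (s k) ≤ n := Nat.le_of_dvd h0 hd
      have h2 : 2 ^ (s k) ≤ p ^ (s k) := Nat.pow_le_pow_left hp.two_le _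
      have h3 : 2 ^ k ≤ 2 ^ (s k) := Nat.pow_le_pow_right (by norm_num) hmono.le_apply
      have h4 : k < 2 ^ k := Nat.lt_two_pow_self
      omega
    · rintro ⟨k, _, ⟨h0, hN⟩, hv⟩
      exact ⟨⟨h0, hN⟩, k, hv.symm⟩
  rw [hsplit, Finset.card_biUnion]
  · exact Finset.sum_congr rfl fun k _ => card_val_eq p hp (s k) N
  · intro a _ b _ hab
    simp only [Finset.disjoint_left, Finset.mem_filter]
    rintro n ⟨_, ha⟩ ⟨_, hb⟩
    exact hab (hmono.injective (ha ▸ hb))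

private lemma floor_div_close (N q : ℕ) (hq : 0 < q) :
    |((N / q : ℕ) : ℝ) - (N : ℝ) / q| ≤ 1 := by
  have hq' : (0 : ℝ) < q := by exact_mod_cast hq
  rw [abs_le]
  constructor
  · have hlt : N < (N / q + 1) * q := by
      have h := Nat.div_add_mod N q
      have h2 := Nat.mod_lt N hq
      nlinarith [Nat.div_mul_le_self N q]
    have hlt' : (N : ℝ) < ((N / q : ℕ) + 1) * q := by exact_mod_cast hlt
    rw [neg_le_sub_iff_le_add, div_le_iff₀ hq']
    linarith
  · have h : ((N / q : ℕ) : ℝ) ≤ (N : ℝ) / q := Nat.cast_div_le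
    linarith

/-- If `s₀ < s₁ < ⋯` are positive integers with gaps `> 1` and `p` is prime, then
`{n ∈ ℕ+ : val_p(n) ∈ {s₀, s₁, …}}` has natural density
`∑ₖ (p^{-s_k} - p^{-s_k - 1})`, the series being convergent. -/
theorem density_val_in_sparse_set (p : ℕ) (hp : p.Prime) (s : ℕ → ℕ)
    (hpos : ∀ i, 0 < s i) (hgap : ∀ i, 1 < s (i + 1) - s i) :
    Summable (fun k : ℕ => (p : ℝ) ^ (-(s k : ℤ)) - (p : ℝ) ^ (-(s k : ℤ) - 1)) ∧
    hasDensity {n | 0 < n ∧ padicValNat p n ∈ Set.range s}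
      (∑' k : ℕ, ((p : ℝ) ^ (-(s k : ℤ)) - (p : ℝ) ^ (-(s k : ℤ) - 1))) := by
  have hmono : StrictMono s := strictMono_nat_of_lt_succ (fun n => by have := hgap n; omega)
  have hstep : ∀ i, s i + 2 ≤ s (i + 1) := fun i => by have := hgap i; omega
  have hsk : ∀ k, 2 * k + 1 ≤ s k := by
    intro k
    induction k with
    | zero => have := hpos 0; omega
    | succ n ih => have := hstep n; omega
  set c : ℕ → ℝ := fun k => (p : ℝ) ^ (-(s k : ℤ)) - (p : ℝ) ^ (-(s k : ℤ) - 1) with hc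
  have hp2 : (2 : ℝ) ≤ (p : ℝ) := by exact_mod_cast hp.two_le
  have hp1 : (1 : ℝ) ≤ (p : ℝ) := by linarith
  have hppos : (0 : ℝ) < (p : ℝ) := by linarith
  have hc_nonneg : ∀ k, 0 ≤ c k := by
    intro k
    have := zpow_le_zpow_right₀ hp1 (show -(s k : ℤ) - 1 ≤ -(s k : ℤ) by omega)
    simp only [hc]; linarith
  have hpow_le : ∀ k, (2 : ℝ) ^ (2 * k + 1) ≤ (p : ℝ) ^ (s k) := by
    intro k
    calc (2 : ℝ) ^ (2 * k + 1) ≤ (2 : ℝ) ^ (s k) :=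
          pow_le_pow_right₀ one_le_two (hsk k)
      _ ≤ (p : ℝ) ^ (s k) := pow_le_pow_left₀ (by norm_num) hp2 _
  have htwo : ∀ k : ℕ, (2 : ℝ) ^ (2 * k + 1) = 2 * 4 ^ k := by
    intro k
    rw [pow_succ, pow_mul]
    norm_num [mul_comm]
  have hc_le : ∀ k, c k ≤ (1 / 2) * (1 / 4) ^ k := by
    intro k
    have h1 : c k ≤ (p : ℝ) ^ (-(s k : ℤ)) := by
      have : (0 : ℝ) ≤ (p : ℝ) ^ (-(s k : ℤ) - 1) := zpow_nonneg hppos.le _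
      simp only [hc]; linarith
    have h2 : (p : ℝ) ^ (-(s k : ℤ)) = ((p : ℝ) ^ (s k : ℕ))⁻¹ := by
      rw [zpow_neg, zpow_natCast]
    have h3 : ((p : ℝ) ^ (s k : ℕ))⁻¹ ≤ ((2 : ℝ) ^ (2 * k + 1))⁻¹ :=
      inv_anti₀ (by positivity) (hpow_le k)
    have h4 : ((2 : ℝ) ^ (2 * k + 1))⁻¹ = (1 / 2) * (1 / 4) ^ k := by
      rw [htwo k, mul_inv, one_div, one_div, ← inv_pow]
    calc c k ≤ (p : ℝ) ^ (-(s k : ℤ)) := h1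
      _ = ((p : ℝ) ^ (s k : ℕ))⁻¹ := h2
      _ ≤ ((2 : ℝ) ^ (2 * k + 1))⁻¹ := h3
      _ = (1 / 2) * (1 / 4) ^ k := h4
  have hgeo : Summable (fun k : ℕ => (1 / 2 : ℝ) * (1 / 4) ^ k) :=
    (summable_geometric_of_lt_one (by norm_num) (by norm_num)).mul_left _
  have hsum : Summable c := Summable.of_nonneg_of_le hc_nonneg hc_le hgeo
  refine ⟨hsum, ?_⟩
  set C : ℝ := ∑' k, c k with hC
  have htail : ∀ t : ℕ, ∑' k, c (k + t) ≤ (1 / 4 : ℝ) ^ t := by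
    intro t
    have hs1 : Summable (fun k => c (k + t)) := (summable_nat_add_iff t).2 hsum
    have hs2 : Summable (fun k : ℕ => (1 / 2 : ℝ) * (1 / 4) ^ (k + t)) := by
      apply Summable.of_nonneg_of_le (fun k => by positivity)
        (fun k => le_of_eq (by rw [pow_add]; ring))
        (((summable_geometric_of_lt_one (show (0:ℝ) ≤ 1/4 by norm_num)
          (by norm_num))).mul_left ((1 / 2 : ℝ) * (1 / 4) ^ t))
    have h1 : ∑' k, c (k + t) ≤ ∑' k : ℕ, (1 / 2 : ℝ) * (1 / 4) ^ (k + t) :=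
      hs1.tsum_le_tsum (fun k => hc_le (k + t)) hs2
    have h2 : ∑' k : ℕ, (1 / 2 : ℝ) * (1 / 4) ^ (k + t)
        = (1 / 2) * (1 / 4) ^ t * (1 - 1 / 4 : ℝ)⁻¹ := by
      rw [← tsum_geometric_of_lt_one (show (0:ℝ) ≤ 1/4 by norm_num) (by norm_num),
        ← tsum_mul_left]
      exact tsum_congr fun k => by rw [pow_add]; ring
    rw [h2] at h1
    nlinarith [pow_nonneg (show (0:ℝ) ≤ 1/4 by norm_num) t]
  have htail_nonneg : ∀ t : ℕ, 0 ≤ ∑' k, c (k + t) := fun t =>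
    tsum_nonneg (fun k => hc_nonneg (k + t))
  rw [hasDensity, ← tendsto_sub_nhds_zero_iff]
  apply squeeze_zero_norm' (a := fun N : ℕ => (2 * (Nat.sqrt N : ℝ) + 1) / N)
  · filter_upwards [eventually_ge_atTop 1] with N hN
    set t := Nat.sqrt N with ht
    have htN : t ≤ N := Nat.sqrt_le_self N
    have hNpos : (0 : ℝ) < N := by exact_mod_cast hN
    have hN4 : N < 4 ^ t := by
      have h1 : N < (t + 1) * (t + 1) := Nat.lt_succ_sqrt N
      have h2 : t + 1 ≤ 2 ^ t := Nat.lt_two_pow_self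
      have h3 : (t + 1) * (t + 1) ≤ 2 ^ t * 2 ^ t := Nat.mul_le_mul h2 h2
      have h4 : 2 ^ t * 2 ^ t = 4 ^ t := by
        rw [← pow_add, show t + t = 2 * t by omega, pow_mul]; norm_num
      omega
    have hcount := count_eq p hp s hmono N
    have hvanish : ∀ k, t ≤ k → N / p ^ (s k) - N / p ^ (s k + 1) = 0 := by
      intro k hk
      have hlt : N < p ^ (s k) := by
        have h1 : 4 ^ t ≤ 4 ^ k := Nat.pow_le_pow_right (by norm_num) hk
        have h2 : (4 : ℕ) ^ k = 2 ^ (2 * k) := by rw [pow_mul]; norm_num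
        have h3 : 2 ^ (2 * k) ≤ 2 ^ (s k) :=
          Nat.pow_le_pow_right (by norm_num) (by have := hsk k; omega)
        have h4 : 2 ^ (s k) ≤ p ^ (s k) := Nat.pow_le_pow_left hp.two_le _
        omega
      have h5 : N / p ^ (s k) = 0 := Nat.div_eq_of_lt hlt
      simp [h5]
    have hsum_eq : ∑ k ∈ Finset.range N, (N / p ^ (s k) - N / p ^ (s k + 1))
        = ∑ k ∈ Finset.range t, (N / p ^ (s k) - N / p ^ (s k + 1)) := by
      symm
      apply Finset.sum_subset (Finset.range_subset_range.2 htN)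
      intro k _ hk
      exact hvanish k (by simpa using hk)
    have hCsplit : C = ∑ k ∈ Finset.range t, c k + ∑' k, c (k + t) :=
      (Summable.sum_add_tsum_nat_add t hsum).symm
    have hterm : ∀ k, |((N / p ^ (s k) - N / p ^ (s k + 1) : ℕ) : ℝ) - (N : ℝ) * c k| ≤ 2 := by
      intro k
      have hle : N / p ^ (s k + 1) ≤ N / p ^ (s k) :=
        Nat.div_le_div_left (Nat.pow_le_pow_right hp.one_lt.le (Nat.le_succ _))
          (pow_pos hp.pos _)
      have hcast : ((N / p ^ (s k) - N / p ^ (s k + 1) : ℕ) : ℝ)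
          = ((N / p ^ (s k) : ℕ) : ℝ) - ((N / p ^ (s k + 1) : ℕ) : ℝ) := by
        exact Nat.cast_sub hle
      have hNc : (N : ℝ) * c k
          = (N : ℝ) / ((p ^ (s k) : ℕ) : ℝ) - (N : ℝ) / ((p ^ (s k + 1) : ℕ) : ℝ) := by
        simp only [hc]
        rw [mul_sub]
        congr 1
        · rw [zpow_neg, zpow_natCast, div_eq_mul_inv]
          push_cast
          ring
        · rw [show -(s k : ℤ) - 1 = -(((s k + 1 : ℕ) : ℤ)) by push_cast; ring,
            zpow_neg, zpow_natCast, div_eq_mul_inv]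
          push_cast
          ring
      have h1 := floor_div_close N (p ^ (s k)) (pow_pos hp.pos _)
      have h2 := floor_div_close N (p ^ (s k + 1)) (pow_pos hp.pos _)
      rw [hcast, hNc]
      have hX : ((N / p ^ (s k) : ℕ) : ℝ) - ((N / p ^ (s k + 1) : ℕ) : ℝ)
            - ((N : ℝ) / ((p ^ (s k) : ℕ) : ℝ) - (N : ℝ) / ((p ^ (s k + 1) : ℕ) : ℝ))
          = (((N / p ^ (s k) : ℕ) : ℝ) - (N : ℝ) / ((p ^ (s k) : ℕ) : ℝ))
            - (((N / p ^ (s k + 1) : ℕ) : ℝ) - (N : ℝ) / ((p ^ (s k + 1) : ℕ) : ℝ)) := by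
        ring
      rw [hX, abs_le]
      obtain ⟨h1a, h1b⟩ := abs_le.mp h1
      obtain ⟨h2a, h2b⟩ := abs_le.mp h2
      constructor <;> linarith
    rw [hcount, hsum_eq, Nat.cast_sum, hCsplit, Real.norm_eq_abs]
    have hexp : (∑ k ∈ Finset.range t, ((N / p ^ (s k) - N / p ^ (s k + 1) : ℕ) : ℝ)) / N
          - (∑ k ∈ Finset.range t, c k + ∑' k, c (k + t))
        = (∑ k ∈ Finset.range t,
            (((N / p ^ (s k) - N / p ^ (s k + 1) : ℕ) : ℝ) / N - c k)) - ∑' k, c (k + t) := by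
      rw [Finset.sum_sub_distrib
        (f := fun k => ((N / p ^ (s k) - N / p ^ (s k + 1) : ℕ) : ℝ) / (N : ℝ)) (g := c),
        Finset.sum_div]
      ring
    rw [hexp]
    have hmain : |∑ k ∈ Finset.range t,
          (((N / p ^ (s k) - N / p ^ (s k + 1) : ℕ) : ℝ) / N - c k)| ≤ t * (2 / N) := by
      calc |∑ k ∈ Finset.range t, (((N / p ^ (s k) - N / p ^ (s k + 1) : ℕ) : ℝ) / N - c k)|
          ≤ ∑ k ∈ Finset.range t,
            |((N / p ^ (s k) - N / p ^ (s k + 1) : ℕ) : ℝ) / N - c k| :=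
            Finset.abs_sum_le_sum_abs _ _
        _ ≤ ∑ _k ∈ Finset.range t, (2 / (N : ℝ)) := by
            apply Finset.sum_le_sum
            intro k _
            have heq : ((N / p ^ (s k) - N / p ^ (s k + 1) : ℕ) : ℝ) / N - c k
                = (((N / p ^ (s k) - N / p ^ (s k + 1) : ℕ) : ℝ) - (N : ℝ) * c k) / N := by
              rw [sub_div, mul_div_cancel_left₀ _ hNpos.ne']
            rw [heq, abs_div, abs_of_pos hNpos]
            exact div_le_div_of_nonneg_right (hterm k) hNpos.le
        _ = t * (2 / N) := by rw [Finset.sum_const, Finset.card_range, nsmul_eq_mul]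
    have htail2 : |∑' k, c (k + t)| ≤ 1 / N := by
      rw [abs_of_nonneg (htail_nonneg t)]
      calc ∑' k, c (k + t) ≤ (1 / 4 : ℝ) ^ t := htail t
        _ = ((4 : ℝ) ^ t)⁻¹ := by rw [one_div, inv_pow]
        _ ≤ (N : ℝ)⁻¹ := by
            apply inv_anti₀ hNpos
            exact_mod_cast hN4.le
        _ = 1 / N := (one_div _).symm
    calc |(∑ k ∈ Finset.range t,
            (((N / p ^ (s k) - N / p ^ (s k + 1) : ℕ) : ℝ) / N - c k)) - ∑' k, c (k + t)|
        ≤ |∑ k ∈ Finset.range t,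
            (((N / p ^ (s k) - N / p ^ (s k + 1) : ℕ) : ℝ) / N - c k)| + |∑' k, c (k + t)| :=
          abs_sub _ _
      _ ≤ t * (2 / N) + 1 / N := add_le_add hmain htail2
      _ = (2 * (t : ℝ) + 1) / N := by field_simp
  · have hsqrt : Tendsto (fun N : ℕ => Nat.sqrt N) atTop atTop :=
      tendsto_atTop_atTop.2 fun b => ⟨b * b, fun a ha => Nat.le_sqrt.2 ha⟩
    have hinv : Tendsto (fun N : ℕ => 1 / (Nat.sqrt N : ℝ)) atTop (nhds 0) :=
      tendsto_one_div_atTop_nhds_zero_nat.comp hsqrt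
    have h1 : Tendsto (fun N : ℕ => (Nat.sqrt N : ℝ) / N) atTop (nhds 0) := by
      apply squeeze_zero' (Filter.Eventually.of_forall fun N => by positivity) _ hinv
      filter_upwards [eventually_ge_atTop 1] with N hN
      have hNpos : (0 : ℝ) < N := by exact_mod_cast hN
      have htpos : (0 : ℝ) < (Nat.sqrt N : ℝ) := by
        exact_mod_cast Nat.sqrt_pos.2 hN
      rw [div_le_div_iff₀ hNpos htpos, one_mul]
      exact_mod_cast Nat.sqrt_le N
    have h2 : Tendsto (fun N : ℕ => 1 / (N : ℝ)) atTop (nhds 0) :=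
      tendsto_one_div_atTop_nhds_zero_nat
    have heq : (fun N : ℕ => (2 * (Nat.sqrt N : ℝ) + 1) / N)
        = fun N : ℕ => 2 * ((Nat.sqrt N : ℝ) / N) + 1 / N := by
      funext N
      rw [add_div, mul_div_assoc]
    rw [heq]
    simpa using (h1.const_mul 2).add h2
end

section
/- Let p ≠ q be primes, let n, m > 1 be integers, and let c, d be integers with 0 ≤ d < n and 0 ≤ c < m. Then the set {s ∈ ℕ+ : val_p(s) ≡ d (mod n) and val_q(s) ≡ c (mod m)} has natural density p^{−d}·(1 − p^{−1})·(1 − p^{−n})^{−1} · q^{−c}·(1 − q^{−1})·(1 − q^{−m})^{−1}. -/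
open Finset Filter


lemma val_eq_iff' {p s a : ℕ} (hp : p.Prime) (hs : s ≠ 0) :
    padicValNat p s = a ↔ p ^ a ∣ s ∧ ¬ p ^ (a + 1) ∣ s := by
  rw [Nat.Prime.pow_dvd_iff_le_factorization hp hs,
    Nat.Prime.pow_dvd_iff_le_factorization hp hs,
    Nat.factorization_def _ hp]
  omega

lemma count_eq_s5 {p q : ℕ} (hp : p.Prime) (hq : q.Prime) (hpq : p ≠ q) (a b N : ℕ) :
    ((Finset.Ioc 0 N).filter
        (fun s => padicValNat p s = a ∧ padicValNat q s = b)).card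
      + N / (p ^ (a + 1) * q ^ b) + N / (p ^ a * q ^ (b + 1))
    = N / (p ^ a * q ^ b) + N / (p ^ (a + 1) * q ^ (b + 1)) := by
  have hco : Nat.Coprime p q := (Nat.coprime_primes hp hq).mpr hpq
  set M : ℕ → Finset ℕ := fun x => (Finset.Ioc 0 N).filter (x ∣ ·) with hM
  have hcard : ∀ x, (M x).card = N / x := fun x => Nat.Ioc_filter_dvd_card_eq_div N x
  have key : ((Finset.Ioc 0 N).filter
      (fun s => padicValNat p s = a ∧ padicValNat q s = b))
      = M (p ^ a * q ^ b) \ (M (p ^ (a+1) * q ^ b) ∪ M (p ^ a * q ^ (b+1))) := by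
    ext s
    simp only [hM, Finset.mem_filter, Finset.mem_sdiff, Finset.mem_union, Finset.mem_Ioc, not_or]
    constructor
    · rintro ⟨⟨h0, hN⟩, hv, hw⟩
      have hs : s ≠ 0 := h0.ne'
      obtain ⟨hpd, hpnd⟩ := (val_eq_iff' hp hs).mp hv
      obtain ⟨hqd, hqnd⟩ := (val_eq_iff' hq hs).mp hw
      refine ⟨⟨⟨h0, hN⟩, Nat.Coprime.mul_dvd_of_dvd_of_dvd (Nat.Coprime.pow _ _ hco) hpd hqd⟩,
        fun h => hpnd ((dvd_mul_right _ _).trans h.2),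
        fun h => hqnd ((dvd_mul_left _ _).trans h.2)⟩
    · rintro ⟨⟨⟨h0, hN⟩, hdd⟩, h1, h2⟩
      have hs : s ≠ 0 := h0.ne'
      have hpd : p ^ a ∣ s := (dvd_mul_right _ _).trans hdd
      have hqd : q ^ b ∣ s := (dvd_mul_left _ _).trans hdd
      refine ⟨⟨h0, hN⟩, (val_eq_iff' hp hs).mpr ⟨hpd, fun hc => ?_⟩,
        (val_eq_iff' hq hs).mpr ⟨hqd, fun hc => ?_⟩⟩
      · exact h1 ⟨⟨h0, hN⟩, Nat.Coprime.mul_dvd_of_dvd_of_dvd (Nat.Coprime.pow _ _ hco) hc hqd⟩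
      · exact h2 ⟨⟨h0, hN⟩, Nat.Coprime.mul_dvd_of_dvd_of_dvd (Nat.Coprime.pow _ _ hco) hpd hc⟩
  have hsub : M (p ^ (a+1) * q ^ b) ∪ M (p ^ a * q ^ (b+1)) ⊆ M (p ^ a * q ^ b) := by
    intro s hs
    simp only [hM, mem_union, mem_filter] at hs ⊢
    rcases hs with ⟨h1, h2⟩ | ⟨h1, h2⟩
    · exact ⟨h1, (mul_dvd_mul (pow_dvd_pow p (Nat.le_succ a)) dvd_rfl).trans h2⟩
    · exact ⟨h1, (mul_dvd_mul dvd_rfl (pow_dvd_pow q (Nat.le_succ b))).trans h2⟩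
  have hint : M (p ^ (a+1) * q ^ b) ∩ M (p ^ a * q ^ (b+1)) = M (p ^ (a+1) * q ^ (b+1)) := by
    ext s
    simp only [hM, mem_inter, mem_filter]
    constructor
    · rintro ⟨⟨h1, h2⟩, ⟨h3, h4⟩⟩
      exact ⟨h1, Nat.Coprime.mul_dvd_of_dvd_of_dvd (Nat.Coprime.pow _ _ hco)
        ((dvd_mul_right _ _).trans h2) ((dvd_mul_left _ _).trans h4)⟩
    · rintro ⟨h1, h2⟩
      exact ⟨⟨h1, (mul_dvd_mul dvd_rfl (pow_dvd_pow q (Nat.le_succ b))).trans h2⟩,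
        ⟨h1, (mul_dvd_mul (pow_dvd_pow p (Nat.le_succ a)) dvd_rfl).trans h2⟩⟩
  have h1 := Finset.card_sdiff_add_card_eq_card hsub
  have h2 := Finset.card_union_add_card_inter
    (M (p ^ (a+1) * q ^ b)) (M (p ^ a * q ^ (b+1)))
  rw [hint] at h2
  rw [key]
  rw [← hcard (p ^ (a+1) * q ^ b), ← hcard (p ^ a * q ^ (b+1)),
    ← hcard (p ^ a * q ^ b), ← hcard (p ^ (a+1) * q ^ (b+1))]
  omega

lemma nat_div_cast_bounds (N x : ℕ) (hx : 0 < x) :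
    (N:ℝ)/x - 1 < ((N/x : ℕ):ℝ) ∧ ((N/x : ℕ):ℝ) ≤ (N:ℝ)/x := by
  have h := Nat.div_add_mod N x
  have hm := Nat.mod_lt N hx
  have hx' : (0:ℝ) < x := by exact_mod_cast hx
  have he : (N:ℝ) = (x:ℝ) * ((N/x : ℕ):ℝ) + ((N % x : ℕ):ℝ) := by exact_mod_cast h.symm
  have hm' : ((N % x : ℕ):ℝ) < x := by exact_mod_cast hm
  have hm0 : (0:ℝ) ≤ ((N % x : ℕ):ℝ) := Nat.cast_nonneg _
  constructor
  · rw [sub_lt_iff_lt_add, div_lt_iff₀ hx']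
    nlinarith
  · rw [le_div_iff₀ hx']
    nlinarith

lemma count_approx {p q : ℕ} (hp : p.Prime) (hq : q.Prime) (hpq : p ≠ q) (a b N : ℕ) :
    |(((Finset.Ioc 0 N).filter
        (fun s => padicValNat p s = a ∧ padicValNat q s = b)).card : ℝ)
      - (N:ℝ) * ((((p:ℝ)^a)⁻¹ - ((p:ℝ)^(a+1))⁻¹) * (((q:ℝ)^b)⁻¹ - ((q:ℝ)^(b+1))⁻¹))| ≤ 4 := by
  have hp0 : (0:ℝ) < p := by exact_mod_cast hp.pos
  have hq0 : (0:ℝ) < q := by exact_mod_cast hq.pos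
  have hx0 : 0 < p ^ a * q ^ b := Nat.mul_pos (Nat.pow_pos hp.pos) (Nat.pow_pos hq.pos)
  have hx1 : 0 < p ^ (a+1) * q ^ b := Nat.mul_pos (Nat.pow_pos hp.pos) (Nat.pow_pos hq.pos)
  have hx2 : 0 < p ^ a * q ^ (b+1) := Nat.mul_pos (Nat.pow_pos hp.pos) (Nat.pow_pos hq.pos)
  have hx3 : 0 < p ^ (a+1) * q ^ (b+1) := Nat.mul_pos (Nat.pow_pos hp.pos) (Nat.pow_pos hq.pos)
  have B0 := nat_div_cast_bounds N _ hx0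
  have B1 := nat_div_cast_bounds N _ hx1
  have B2 := nat_div_cast_bounds N _ hx2
  have B3 := nat_div_cast_bounds N _ hx3
  have hcnt := count_eq_s5 hp hq hpq a b N
  have hcnt' : (((Finset.Ioc 0 N).filter
        (fun s => padicValNat p s = a ∧ padicValNat q s = b)).card : ℝ)
      + ((N / (p ^ (a+1) * q ^ b) : ℕ) : ℝ) + ((N / (p ^ a * q ^ (b+1)) : ℕ) : ℝ)
      = ((N / (p ^ a * q ^ b) : ℕ) : ℝ) + ((N / (p ^ (a+1) * q ^ (b+1)) : ℕ) : ℝ) := by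
    exact_mod_cast hcnt
  have hexp : (N:ℝ) * ((((p:ℝ)^a)⁻¹ - ((p:ℝ)^(a+1))⁻¹) * (((q:ℝ)^b)⁻¹ - ((q:ℝ)^(b+1))⁻¹))
      = (N:ℝ)/((p ^ a * q ^ b : ℕ):ℝ) - (N:ℝ)/((p ^ (a+1) * q ^ b : ℕ):ℝ)
        - (N:ℝ)/((p ^ a * q ^ (b+1) : ℕ):ℝ) + (N:ℝ)/((p ^ (a+1) * q ^ (b+1) : ℕ):ℝ) := by
    push_cast
    field_simp
    ring
  rw [hexp, abs_le]
  constructor <;> linarith [B0.1, B0.2, B1.1, B1.2, B2.1, B2.2, B3.1, B3.2]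


section
variable {p q n m c d : ℕ}

lemma sum_card_le (hn : 0 < n) (hm : 0 < m) (hd : d < n) (hc : c < m) (T N : ℕ) :
    ∑ jk ∈ (range T) ×ˢ (range T),
      ((Finset.Ioc 0 N).filter
        (fun s => padicValNat p s = d + jk.1 * n ∧ padicValNat q s = c + jk.2 * m)).card
    ≤ ((Finset.Ioc 0 N).filter
        (fun s => padicValNat p s % n = d ∧ padicValNat q s % m = c)).card := by
  have hdisj : ∀ x ∈ (range T) ×ˢ (range T), ∀ y ∈ (range T) ×ˢ (range T), x ≠ y →
      Disjoint ((Finset.Ioc 0 N).filter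
        (fun s => padicValNat p s = d + x.1 * n ∧ padicValNat q s = c + x.2 * m))
        ((Finset.Ioc 0 N).filter
        (fun s => padicValNat p s = d + y.1 * n ∧ padicValNat q s = c + y.2 * m)) := by
    intro x _ y _ hxy
    rw [Finset.disjoint_left]
    intro s hsx hsy
    simp only [mem_filter] at hsx hsy
    apply hxy
    have h1 : x.1 = y.1 := by nlinarith [hsx.2.1, hsy.2.1, hsx.2.2, hsy.2.2]
    have h2 : x.2 = y.2 := by nlinarith [hsx.2.1, hsy.2.1, hsx.2.2, hsy.2.2]
    exact Prod.ext h1 h2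
  rw [← Finset.card_biUnion hdisj]
  apply Finset.card_le_card
  intro s hs
  simp only [Finset.mem_biUnion, mem_filter] at hs ⊢
  obtain ⟨jk, _, h1, h2, h3⟩ := hs
  refine ⟨h1, ?_, ?_⟩
  · rw [h2, Nat.add_mul_mod_self_right, Nat.mod_eq_of_lt hd]
  · rw [h3, Nat.add_mul_mod_self_right, Nat.mod_eq_of_lt hc]

lemma card_le_sum (hp : p.Prime) (hq : q.Prime)
    (hn : 0 < n) (hm : 0 < m) (hd : d < n) (hc : c < m) (T N : ℕ) :
    ((Finset.Ioc 0 N).filter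
        (fun s => padicValNat p s % n = d ∧ padicValNat q s % m = c)).card
    ≤ (∑ jk ∈ (range T) ×ˢ (range T),
      ((Finset.Ioc 0 N).filter
        (fun s => padicValNat p s = d + jk.1 * n ∧ padicValNat q s = c + jk.2 * m)).card)
      + N / p ^ (d + T * n) + N / q ^ (c + T * m) := by
  have hdisj : ∀ x ∈ (range T) ×ˢ (range T), ∀ y ∈ (range T) ×ˢ (range T), x ≠ y →
      Disjoint ((Finset.Ioc 0 N).filter
        (fun s => padicValNat p s = d + x.1 * n ∧ padicValNat q s = c + x.2 * m))
        ((Finset.Ioc 0 N).filter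
        (fun s => padicValNat p s = d + y.1 * n ∧ padicValNat q s = c + y.2 * m)) := by
    intro x _ y _ hxy
    rw [Finset.disjoint_left]
    intro s hsx hsy
    simp only [mem_filter] at hsx hsy
    apply hxy
    have h1 : x.1 = y.1 := by nlinarith [hsx.2.1, hsy.2.1, hsx.2.2, hsy.2.2]
    have h2 : x.2 = y.2 := by nlinarith [hsx.2.1, hsy.2.1, hsx.2.2, hsy.2.2]
    exact Prod.ext h1 h2
  rw [← Finset.card_biUnion hdisj, ← Nat.Ioc_filter_dvd_card_eq_div N (p ^ (d + T * n)),
    ← Nat.Ioc_filter_dvd_card_eq_div N (q ^ (c + T * m))]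
  calc ((Finset.Ioc 0 N).filter
        (fun s => padicValNat p s % n = d ∧ padicValNat q s % m = c)).card
      ≤ (((range T) ×ˢ (range T)).biUnion (fun jk => (Finset.Ioc 0 N).filter
          (fun s => padicValNat p s = d + jk.1 * n ∧ padicValNat q s = c + jk.2 * m))
        ∪ (Finset.Ioc 0 N).filter (p ^ (d + T * n) ∣ ·)
        ∪ (Finset.Ioc 0 N).filter (q ^ (c + T * m) ∣ ·)).card := by
        apply Finset.card_le_card
        intro s hs
        simp only [mem_filter, Finset.mem_union, Finset.mem_biUnion, Finset.mem_Ioc] at hs ⊢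
        obtain ⟨⟨h0, hN⟩, h1, h2⟩ := hs
        have hs0 : s ≠ 0 := h0.ne'
        have hv := Nat.div_add_mod (padicValNat p s) n
        have hw := Nat.div_add_mod (padicValNat q s) m
        by_cases hjT : padicValNat p s / n < T
        · by_cases hkT : padicValNat q s / m < T
          · exact Or.inl (Or.inl ⟨⟨padicValNat p s / n, padicValNat q s / m⟩,
              by simp [Finset.mem_product, hjT, hkT], ⟨h0, hN⟩,
              by show padicValNat p s = d + padicValNat p s / n * n
                 rw [mul_comm] at hv; omega,
              by show padicValNat q s = c + padicValNat q s / m * m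
                 rw [mul_comm] at hw; omega⟩)
          · refine Or.inr ⟨⟨h0, hN⟩, ?_⟩
            rw [Nat.Prime.pow_dvd_iff_le_factorization hq hs0, Nat.factorization_def _ hq]
            have : T ≤ padicValNat q s / m := by omega
            nlinarith
        · refine Or.inl (Or.inr ⟨⟨h0, hN⟩, ?_⟩)
          rw [Nat.Prime.pow_dvd_iff_le_factorization hp hs0, Nat.factorization_def _ hp]
          have : T ≤ padicValNat p s / n := by omega
          nlinarith
    _ ≤ _ := by
        refine (Finset.card_union_le _ _).trans ?_
        have := Finset.card_union_le
          (((range T) ×ˢ (range T)).biUnion (fun jk => (Finset.Ioc 0 N).filter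
            (fun s => padicValNat p s = d + jk.1 * n ∧ padicValNat q s = c + jk.2 * m)))
          ((Finset.Ioc 0 N).filter (p ^ (d + T * n) ∣ ·))
        omega
end

lemma tendsto_SP {p n : ℕ} (hp : p.Prime) (hn : 0 < n) (d : ℕ) :
    Tendsto (fun T => ∑ j ∈ range T, (((p:ℝ)^(d+j*n))⁻¹ - ((p:ℝ)^(d+j*n+1))⁻¹)) atTop
      (nhds (((p:ℝ)^d)⁻¹ * (1 - (p:ℝ)⁻¹) * (1 - ((p:ℝ)^n)⁻¹)⁻¹)) := by
  have hp1 : (1:ℝ) < p := by exact_mod_cast hp.one_lt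
  have hpne : (p:ℝ) ≠ 0 := by positivity
  have hr1 : ((p:ℝ)^n)⁻¹ < 1 := by
    rw [inv_lt_one_iff₀]
    right
    exact one_lt_pow₀ hp1 (by omega)
  have hr0 : (0:ℝ) ≤ ((p:ℝ)^n)⁻¹ := by positivity
  have hterm : ∀ j, (((p:ℝ)^(d+j*n))⁻¹ - ((p:ℝ)^(d+j*n+1))⁻¹)
      = ((p:ℝ)^d)⁻¹ * (1 - (p:ℝ)⁻¹) * (((p:ℝ)^n)⁻¹)^j := by
    intro j
    have e1 : (p:ℝ)^(d+j*n) = (p:ℝ)^d * ((p:ℝ)^n)^j := by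
      rw [pow_add, mul_comm j n, pow_mul]
    have e2 : (p:ℝ)^(d+j*n+1) = (p:ℝ)^d * ((p:ℝ)^n)^j * p := by
      rw [pow_succ, e1]
    rw [e1, e2, inv_pow]
    field_simp
  simp_rw [hterm, ← Finset.mul_sum]
  have := (hasSum_geometric_of_lt_one hr0 hr1).tendsto_sum_nat
  exact this.const_mul _

lemma tendsto_err {p n : ℕ} (hp : p.Prime) (hn : 0 < n) (d : ℕ) :
    Tendsto (fun T => ((p:ℝ)^(d+T*n))⁻¹) atTop (nhds 0) := by
  have hp1 : (1:ℝ) < p := by exact_mod_cast hp.one_lt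
  have hr1 : ((p:ℝ)^n)⁻¹ < 1 := by
    rw [inv_lt_one_iff₀]; right; exact one_lt_pow₀ hp1 (by omega)
  have hr0 : (0:ℝ) ≤ ((p:ℝ)^n)⁻¹ := by positivity
  have hterm : ∀ j : ℕ, ((p:ℝ)^(d+j*n))⁻¹ = ((p:ℝ)^d)⁻¹ * (((p:ℝ)^n)⁻¹)^j := by
    intro j
    rw [pow_add, mul_comm j n, pow_mul, mul_inv, inv_pow]
  simp_rw [hterm]
  have := (tendsto_pow_atTop_nhds_zero_of_lt_one hr0 hr1).const_mul (((p:ℝ)^d)⁻¹)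
  simpa using this

set_option maxHeartbeats 1000000 in
/-- For distinct primes `p ≠ q`, `n, m > 1`, `0 ≤ d < n`, `0 ≤ c < m`, the set
`{s ∈ ℕ+ : val_p(s) ≡ d (mod n), val_q(s) ≡ c (mod m)}` has natural density
`p^{-d}(1-p^{-1})(1-p^{-n})^{-1} · q^{-c}(1-q^{-1})(1-q^{-m})^{-1}`. -/
theorem density_val_congruence_two_primes (p q n m c d : ℕ)
    (hp : p.Prime) (hq : q.Prime) (hpq : p ≠ q)
    (hn : 1 < n) (hm : 1 < m) (hd : d < n) (hc : c < m) :
    hasDensity {s | 0 < s ∧ padicValNat p s % n = d ∧ padicValNat q s % m = c}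
      ((p : ℝ) ^ (-(d : ℤ)) * (1 - (p : ℝ)⁻¹) * (1 - (p : ℝ) ^ (-(n : ℤ)))⁻¹ *
       ((q : ℝ) ^ (-(c : ℤ)) * (1 - (q : ℝ)⁻¹) * (1 - (q : ℝ) ^ (-(m : ℤ)))⁻¹)) := by
  classical
  have hn0 : 0 < n := by omega
  have hm0 : 0 < m := by omega
  have hp0 : (0:ℝ) < p := by exact_mod_cast hp.pos
  have hq0 : (0:ℝ) < q := by exact_mod_cast hq.pos
  set L : ℝ := (p : ℝ) ^ (-(d : ℤ)) * (1 - (p : ℝ)⁻¹) * (1 - (p : ℝ) ^ (-(n : ℤ)))⁻¹ *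
       ((q : ℝ) ^ (-(c : ℤ)) * (1 - (q : ℝ)⁻¹) * (1 - (q : ℝ) ^ (-(m : ℤ)))⁻¹) with hLdef
  have hL : L = (((p:ℝ)^d)⁻¹ * (1 - (p:ℝ)⁻¹) * (1 - ((p:ℝ)^n)⁻¹)⁻¹) *
      (((q:ℝ)^c)⁻¹ * (1 - (q:ℝ)⁻¹) * (1 - ((q:ℝ)^m)⁻¹)⁻¹) := by
    rw [hLdef]
    simp [zpow_neg, zpow_natCast]
  have hlim : Tendsto (fun T =>
      |(∑ j ∈ range T, (((p:ℝ)^(d+j*n))⁻¹ - ((p:ℝ)^(d+j*n+1))⁻¹)) *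
       (∑ k ∈ range T, (((q:ℝ)^(c+k*m))⁻¹ - ((q:ℝ)^(c+k*m+1))⁻¹)) - L|
      + (((p:ℝ)^(d+T*n))⁻¹ + ((q:ℝ)^(c+T*m))⁻¹))
      atTop (nhds 0) := by
    have h1 := (tendsto_SP hp hn0 d).mul (tendsto_SP hq hm0 c)
    rw [← hL] at h1
    have h2 := (h1.sub_const L).abs
    have h3 := (tendsto_err hp hn0 d).add (tendsto_err hq hm0 c)
    simpa using h2.add h3
  unfold hasDensity
  rw [Metric.tendsto_atTop]
  intro ε hε
  obtain ⟨T, hT⟩ : ∃ T,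
      |(∑ j ∈ range T, (((p:ℝ)^(d+j*n))⁻¹ - ((p:ℝ)^(d+j*n+1))⁻¹)) *
       (∑ k ∈ range T, (((q:ℝ)^(c+k*m))⁻¹ - ((q:ℝ)^(c+k*m+1))⁻¹)) - L|
      + (((p:ℝ)^(d+T*n))⁻¹ + ((q:ℝ)^(c+T*m))⁻¹) < ε/2 :=
    (hlim.eventually (gt_mem_nhds (show (0:ℝ) < ε/2 by linarith))).exists
  set SPT : ℝ := ∑ j ∈ range T, (((p:ℝ)^(d+j*n))⁻¹ - ((p:ℝ)^(d+j*n+1))⁻¹) with hSPT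
  set SQT : ℝ := ∑ k ∈ range T, (((q:ℝ)^(c+k*m))⁻¹ - ((q:ℝ)^(c+k*m+1))⁻¹) with hSQT
  set M0 : ℕ := ⌈8*(T:ℝ)^2/ε⌉₊ + 1 with hM0
  refine ⟨max 1 M0, fun N hN => ?_⟩
  have hN1 : 1 ≤ N := le_trans (le_max_left _ _) hN
  have hNM : M0 ≤ N := le_trans (le_max_right _ _) hN
  have hNR : (0:ℝ) < N := by exact_mod_cast hN1
  have hset : ({s | 0 < s ∧ padicValNat p s % n = d ∧ padicValNat q s % m = c}
        ∩ Set.Icc 1 N).ncard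
      = ((Finset.Ioc 0 N).filter
        (fun s => padicValNat p s % n = d ∧ padicValNat q s % m = c)).card := by
    rw [← Set.ncard_coe_finset]
    congr 1
    ext s
    simp only [Set.mem_inter_iff, Set.mem_setOf_eq, Set.mem_Icc, Finset.coe_filter,
      Finset.mem_Ioc]
    constructor
    · rintro ⟨⟨h0, hA, hB⟩, _, hNs⟩; exact ⟨⟨h0, hNs⟩, hA, hB⟩
    · rintro ⟨⟨h0, hNs⟩, hA, hB⟩; exact ⟨⟨h0, hA, hB⟩, h0, hNs⟩
  rw [Real.dist_eq, hset]
  set cnt : ℕ := ((Finset.Ioc 0 N).filter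
      (fun s => padicValNat p s % n = d ∧ padicValNat q s % m = c)).card with hcntdef
  set Sc : ℕ := ∑ jk ∈ (range T) ×ˢ (range T),
      ((Finset.Ioc 0 N).filter
        (fun s => padicValNat p s = d + jk.1 * n ∧ padicValNat q s = c + jk.2 * m)).card
    with hScdef
  have hlow : (Sc:ℝ) ≤ cnt := by exact_mod_cast sum_card_le hn0 hm0 hd hc T N
  have hup := card_le_sum hp hq hn0 hm0 hd hc T N
  have hdiv1 : ((N / p ^ (d + T*n) : ℕ):ℝ) ≤ (N:ℝ) * ((p:ℝ)^(d+T*n))⁻¹ := by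
    have h := (nat_div_cast_bounds N (p ^ (d + T*n)) (Nat.pow_pos hp.pos)).2
    rw [div_eq_mul_inv] at h
    calc ((N / p ^ (d + T*n) : ℕ):ℝ) ≤ (N:ℝ) * (((p ^ (d + T*n) : ℕ)):ℝ)⁻¹ := h
      _ = (N:ℝ) * ((p:ℝ)^(d+T*n))⁻¹ := by push_cast; ring
  have hdiv2 : ((N / q ^ (c + T*m) : ℕ):ℝ) ≤ (N:ℝ) * ((q:ℝ)^(c+T*m))⁻¹ := by
    have h := (nat_div_cast_bounds N (q ^ (c + T*m)) (Nat.pow_pos hq.pos)).2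
    rw [div_eq_mul_inv] at h
    calc ((N / q ^ (c + T*m) : ℕ):ℝ) ≤ (N:ℝ) * (((q ^ (c + T*m) : ℕ)):ℝ)⁻¹ := h
      _ = (N:ℝ) * ((q:ℝ)^(c+T*m))⁻¹ := by push_cast; ring
  have hupR : (cnt:ℝ) ≤ (Sc:ℝ) + (N:ℝ) * ((p:ℝ)^(d+T*n))⁻¹ + (N:ℝ) * ((q:ℝ)^(c+T*m))⁻¹ := by
    have h : (cnt:ℝ) ≤ (Sc:ℝ) + ((N / p ^ (d + T*n) : ℕ):ℝ) + ((N / q ^ (c + T*m) : ℕ):ℝ) := by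
      exact_mod_cast hup
    linarith
  have hprod : (N:ℝ) * (SPT * SQT) = ∑ jk ∈ (range T) ×ˢ (range T),
      (N:ℝ) * ((((p:ℝ)^(d+jk.1*n))⁻¹ - ((p:ℝ)^(d+jk.1*n+1))⁻¹) *
        (((q:ℝ)^(c+jk.2*m))⁻¹ - ((q:ℝ)^(c+jk.2*m+1))⁻¹)) := by
    rw [Finset.sum_product, hSPT, hSQT, Finset.sum_mul_sum, Finset.mul_sum]
    exact Finset.sum_congr rfl fun j _ => by rw [Finset.mul_sum]
  have happrox : |(Sc:ℝ) - (N:ℝ) * (SPT * SQT)| ≤ 4 * (T:ℝ)^2 := by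
    have hcast : (Sc:ℝ) = ∑ jk ∈ (range T) ×ˢ (range T),
        (((Finset.Ioc 0 N).filter
          (fun s => padicValNat p s = d + jk.1 * n ∧ padicValNat q s = c + jk.2 * m)).card : ℝ) := by
      rw [hScdef]; push_cast; rfl
    rw [hcast, hprod, ← Finset.sum_sub_distrib]
    refine (Finset.abs_sum_le_sum_abs _ _).trans ?_
    have hb : ∀ jk ∈ (range T) ×ˢ (range T),
        |(((Finset.Ioc 0 N).filter
          (fun s => padicValNat p s = d + jk.1 * n ∧ padicValNat q s = c + jk.2 * m)).card : ℝ)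
          - (N:ℝ) * ((((p:ℝ)^(d+jk.1*n))⁻¹ - ((p:ℝ)^(d+jk.1*n+1))⁻¹) *
            (((q:ℝ)^(c+jk.2*m))⁻¹ - ((q:ℝ)^(c+jk.2*m+1))⁻¹))| ≤ 4 :=
      fun jk _ => count_approx hp hq hpq _ _ N
    refine (Finset.sum_le_sum hb).trans ?_
    rw [Finset.sum_const, Finset.card_product, Finset.card_range, nsmul_eq_mul]
    push_cast
    nlinarith [sq_nonneg (T:ℝ)]
  have hdecomp : (cnt:ℝ)/N - L
      = ((cnt:ℝ) - Sc)/N + ((Sc:ℝ) - (N:ℝ) * (SPT * SQT))/N + (SPT * SQT - L) := by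
    rw [← add_div]
    have h : (cnt:ℝ) - Sc + ((Sc:ℝ) - (N:ℝ) * (SPT * SQT)) = cnt - (N:ℝ) * (SPT * SQT) := by
      ring
    rw [h, sub_div, mul_div_cancel_left₀ _ hNR.ne']
    ring
  have e1 : |((cnt:ℝ) - Sc)/N| ≤ ((p:ℝ)^(d+T*n))⁻¹ + ((q:ℝ)^(c+T*m))⁻¹ := by
    rw [abs_div, abs_of_pos hNR, div_le_iff₀ hNR, abs_of_nonneg (by linarith)]
    nlinarith [hupR, hlow]
  have e2 : |((Sc:ℝ) - (N:ℝ) * (SPT * SQT))/N| ≤ 4*(T:ℝ)^2/N := by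
    rw [abs_div, abs_of_pos hNR]
    gcongr
  have e4 : 4*(T:ℝ)^2/N < ε/2 := by
    have hM0R : 8*(T:ℝ)^2/ε < (M0:ℝ) := by
      rw [hM0]
      push_cast
      linarith [Nat.le_ceil (8*(T:ℝ)^2/ε)]
    have hM0pos : (0:ℝ) < M0 := by
      have : (0:ℝ) ≤ 8*(T:ℝ)^2/ε := by positivity
      linarith
    have hMN : (M0:ℝ) ≤ N := by exact_mod_cast hNM
    calc 4*(T:ℝ)^2/N ≤ 4*(T:ℝ)^2/M0 := by gcongr
      _ < ε/2 := by
          rw [div_lt_iff₀ hM0pos]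
          rw [div_lt_iff₀ hε] at hM0R
          linarith
  calc |(cnt:ℝ)/N - L| = |((cnt:ℝ) - Sc)/N + ((Sc:ℝ) - (N:ℝ) * (SPT * SQT))/N
        + (SPT * SQT - L)| := by rw [hdecomp]
    _ ≤ |((cnt:ℝ) - Sc)/N + ((Sc:ℝ) - (N:ℝ) * (SPT * SQT))/N| + |SPT * SQT - L| :=
        abs_add_le _ _
    _ ≤ |((cnt:ℝ) - Sc)/N| + |((Sc:ℝ) - (N:ℝ) * (SPT * SQT))/N| + |SPT * SQT - L| := by
        linarith [abs_add_le (((cnt:ℝ) - Sc)/N) (((Sc:ℝ) - (N:ℝ) * (SPT * SQT))/N)]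
    _ < ε := by linarith
end

section
/- Let p be a prime and let M = sift({p}). Then M = {n ∈ ℕ+ : val_p(n) is even}. -/
/-- Membership in the selective sifting of `S`: `0 < n`, and `n` cannot be written as
`n = a·b` with `a ∈ S` and `b` itself in the selective sifting (necessarily `b < n`). -/
def siftMem (S : Set ℕ) : ℕ → Prop := fun n =>
  Nat.strongRecOn n (fun n ih =>
    0 < n ∧ ¬ ∃ a ∈ S, ∃ b, ∃ hb : b < n, ih b hb ∧ n = a * b)

/-- The selective sifting `sift S ⊆ ℕ+`. -/
def sift (S : Set ℕ) : Set ℕ := {n | siftMem S n}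

theorem siftMem_iff (S : Set ℕ) (n : ℕ) : siftMem S n ↔
    0 < n ∧ ¬ ∃ a ∈ S, ∃ b, b < n ∧ siftMem S b ∧ n = a * b := by
  rw [siftMem, Nat.strongRecOn, WellFounded.fix_eq]
  simp only [exists_prop]
  rfl

/-- For a prime `p`, `sift {p} = {n ∈ ℕ+ : val_p(n) even}`. -/
theorem sift_singleton_prime (p : ℕ) (hp : p.Prime) :
    sift {p} = {n | 0 < n ∧ Even (padicValNat p n)} := by
  have : Fact p.Prime := ⟨hp⟩
  ext n
  simp only [sift, Set.mem_setOf_eq]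
  induction n using Nat.strong_induction_on with
  | _ n ih =>
    rw [siftMem_iff]
    constructor
    · rintro ⟨hn, hne⟩
      refine ⟨hn, ?_⟩
      by_contra hodd
      rw [Nat.not_even_iff_odd] at hodd
      have hv : 1 ≤ padicValNat p n := hodd.pos
      have hpd : p ∣ n := dvd_of_one_le_padicValNat hv
      obtain ⟨b, hb⟩ := hpd
      have hb0 : 0 < b := by
        rcases Nat.eq_zero_or_pos b with h | h
        · subst h; simp at hb; omega
        · exact h
      have hblt : b < n := by
        rw [hb]; calc b = 1 * b := (one_mul b).symm
          _ < p * b := by exact (Nat.mul_lt_mul_right hb0).mpr hp.one_lt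
      have hvn : padicValNat p n = 1 + padicValNat p b := by
        rw [hb, padicValNat.mul hp.ne_zero hb0.ne', padicValNat.self hp.one_lt]
      have hevb : Even (padicValNat p b) := by
        rw [hvn] at hodd
        rcases Nat.even_or_odd (padicValNat p b) with h | h
        · exact h
        · exfalso; rw [Nat.odd_iff] at hodd h; omega
      exact hne ⟨p, rfl, b, hblt, (ih b hblt).mpr ⟨hb0, hevb⟩, hb⟩
    · rintro ⟨hn, heven⟩
      refine ⟨hn, ?_⟩
      rintro ⟨a, ha, b, hblt, hsb, hab⟩
      rw [Set.mem_singleton_iff] at ha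
      rw [ha] at hab
      obtain ⟨hb0, hevb⟩ := (ih b hblt).mp hsb
      have hvn : padicValNat p n = 1 + padicValNat p b := by
        rw [hab, padicValNat.mul hp.ne_zero hb0.ne', padicValNat.self hp.one_lt]
      rw [hvn] at heven
      obtain ⟨k, hk⟩ := heven
      obtain ⟨m, hm⟩ := hevb
      omega
end

section
/- Let p, q be distinct primes and let M = sift({p, q, pq}). Then M = {n ∈ ℕ+ : val_p(n) is even and val_q(n) is even}. -/
lemma val_mul (p : ℕ) (hp : p.Prime) {a b : ℕ} (ha : a ≠ 0) (hb : b ≠ 0) :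
    padicValNat p (a * b) = padicValNat p a + padicValNat p b := by
  haveI : Fact p.Prime := ⟨hp⟩
  exact padicValNat.mul ha hb

/-- For distinct primes `p, q`,
`sift {p, q, pq} = {n ∈ ℕ+ : val_p(n) even and val_q(n) even}`. -/
theorem sift_pq (p q : ℕ) (hp : p.Prime) (hq : q.Prime) (hpq : p ≠ q) :
    sift {p, q, p * q} =
      {n | 0 < n ∧ Even (padicValNat p n) ∧ Even (padicValNat q n)} := by
  haveI : Fact p.Prime := ⟨hp⟩
  haveI : Fact q.Prime := ⟨hq⟩
  have hvp : padicValNat p p = 1 := padicValNat.self hp.one_lt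
  have hvq : padicValNat q q = 1 := padicValNat.self hq.one_lt
  have hvpq : padicValNat q p = 0 :=
    padicValNat.eq_zero_of_not_dvd (fun h => hpq ((Nat.prime_dvd_prime_iff_eq hq hp).mp h).symm)
  have hvqp : padicValNat p q = 0 :=
    padicValNat.eq_zero_of_not_dvd (fun h => hpq ((Nat.prime_dvd_prime_iff_eq hp hq).mp h))
  have hpq0 : p * q ≠ 0 := Nat.mul_ne_zero hp.ne_zero hq.ne_zero
  ext n
  simp only [sift, Set.mem_setOf_eq]
  induction n using Nat.strong_induction_on with
  | _ n ih =>
  rw [siftMem_iff]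
  constructor
  · rintro ⟨hn, hno⟩
    refine ⟨hn, ?_⟩
    by_contra hodd
    rw [not_and_or, Nat.not_even_iff_odd, Nat.not_even_iff_odd] at hodd
    have hdvd : ∀ r : ℕ, r.Prime → Odd (padicValNat r n) → r ∣ n := by
      intro r hr ho
      haveI : Fact r.Prime := ⟨hr⟩
      have : 1 ≤ padicValNat r n := ho.pos
      exact dvd_trans (dvd_pow_self r (Nat.one_le_iff_ne_zero.mp this))
        pow_padicValNat_dvd
    apply hno
    have mk : ∀ a ∈ ({p, q, p * q} : Set ℕ), a ∣ n →
        Even (padicValNat p (n / a)) → Even (padicValNat q (n / a)) →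
        ∃ a ∈ ({p, q, p * q} : Set ℕ), ∃ b, b < n ∧ siftMem {p, q, p * q} b ∧ n = a * b := by
      intro a haS hdv hep heq
      have ha1 : 1 < a := by
        rcases haS with rfl | rfl | rfl
        exacts [hp.one_lt, hq.one_lt, one_lt_mul_of_lt_of_le hp.one_lt hq.one_lt.le]
      have hb0 : 0 < n / a := Nat.div_pos (Nat.le_of_dvd hn hdv) (lt_trans one_pos ha1)
      have hblt : n / a < n := Nat.div_lt_self hn ha1
      exact ⟨a, haS, n / a, hblt, (ih _ hblt).mpr ⟨hb0, hep, heq⟩,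
        (Nat.mul_div_cancel' hdv).symm⟩
    have valdiv : ∀ a r : ℕ, r.Prime → a ∣ n → a ≠ 0 →
        padicValNat r n = padicValNat r a + padicValNat r (n / a) := by
      intro a r hr hdv ha0
      have hq0 : n / a ≠ 0 := by
        intro h
        apply hn.ne'
        rw [← Nat.mul_div_cancel' hdv, h, mul_zero]
      conv_lhs => rw [← Nat.mul_div_cancel' hdv]
      exact val_mul r hr ha0 hq0
    have key : Odd (padicValNat p n) → Odd (padicValNat q n) →
        ∃ a ∈ ({p, q, p * q} : Set ℕ), ∃ b, b < n ∧ siftMem {p, q, p * q} b ∧ n = a * b := by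
      intro hop hoq
      have hdp := hdvd p hp hop
      have hdq := hdvd q hq hoq
      have hdpq : p * q ∣ n := Nat.Coprime.mul_dvd_of_dvd_of_dvd
        ((Nat.coprime_primes hp hq).mpr hpq) hdp hdq
      apply mk (p * q) (by simp) hdpq
      · have h1 := valdiv (p * q) p hp hdpq hpq0
        rw [val_mul p hp hp.ne_zero hq.ne_zero, hvp, hvqp] at h1
        rw [Nat.odd_iff] at hop
        rw [Nat.even_iff]
        omega
      · have h1 := valdiv (p * q) q hq hdpq hpq0
        rw [val_mul q hq hp.ne_zero hq.ne_zero, hvq, hvpq] at h1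
        rw [Nat.odd_iff] at hoq
        rw [Nat.even_iff]
        omega
    rcases hodd with hop | hoq
    · by_cases hoq : Odd (padicValNat q n)
      · exact key hop hoq
      · have hdp := hdvd p hp hop
        apply mk p (by simp) hdp
        · have h1 := valdiv p p hp hdp hp.ne_zero
          rw [hvp] at h1
          rw [Nat.odd_iff] at hop
          rw [Nat.even_iff]
          omega
        · have h1 := valdiv p q hq hdp hp.ne_zero
          rw [hvpq] at h1
          rw [Nat.not_odd_iff_even, Nat.even_iff] at hoq
          rw [Nat.even_iff]
          omega
    · by_cases hop : Odd (padicValNat p n)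
      · exact key hop hoq
      · have hdq := hdvd q hq hoq
        apply mk q (by simp) hdq
        · have h1 := valdiv q p hp hdq hq.ne_zero
          rw [hvqp] at h1
          rw [Nat.not_odd_iff_even, Nat.even_iff] at hop
          rw [Nat.even_iff]
          omega
        · have h1 := valdiv q q hq hdq hq.ne_zero
          rw [hvq] at h1
          rw [Nat.odd_iff] at hoq
          rw [Nat.even_iff]
          omega
  · rintro ⟨hn, hep, heq⟩
    refine ⟨hn, ?_⟩
    rintro ⟨a, haS, b, hblt, hsb, rfl⟩
    obtain ⟨hb0, hbp, hbq⟩ := (ih b hblt).mp hsb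
    have hb0' : b ≠ 0 := hb0.ne'
    rcases haS with h | h | h
    · rw [h, val_mul p hp hp.ne_zero hb0', hvp, Nat.even_iff] at hep
      rw [Nat.even_iff] at hbp
      omega
    · rw [h, val_mul q hq hq.ne_zero hb0', hvq, Nat.even_iff] at heq
      rw [Nat.even_iff] at hbq
      omega
    · rw [h, val_mul p hp hpq0 hb0',
        val_mul p hp hp.ne_zero hq.ne_zero, hvp, hvqp, Nat.even_iff] at hep
      rw [Nat.even_iff] at hbp
      omega
end

section
/- Let p be a prime, let k be an even positive integer, and let M = sift({p, p^k}). Then M = {n ∈ ℕ+ : val_p(n) mod (k+1) ∈ {0, 2, 4, ..., k−2}}. -/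
set_option linter.unusedVariables false

lemma siftMem_def (S : Set ℕ) (n : ℕ) :
    siftMem S n ↔ 0 < n ∧ ¬ ∃ a ∈ S, ∃ b, ∃ hb : b < n, siftMem S b ∧ n = a * b :=
  Iff.of_eq (WellFounded.fix_eq Nat.lt_wfRel.wf
    (fun n ih => 0 < n ∧ ¬ ∃ a ∈ S, ∃ b, ∃ hb : b < n, ih b hb ∧ n = a * b) n)

lemma mod_succ_eq (k t r : ℕ) (hr : r ≤ k) : ((k+1)*t + r) % (k+1) = r := by
  rw [Nat.mul_add_mod]; exact Nat.mod_eq_of_lt (by omega)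

lemma sift_key (k v : ℕ) (hk : k % 2 = 0) (hk2 : 2 ≤ k) :
    (v % (k+1) % 2 = 0 ∧ v % (k+1) ≤ k-2) ↔
    ¬ ((1 ≤ v ∧ (v-1) % (k+1) % 2 = 0 ∧ (v-1) % (k+1) ≤ k-2) ∨
       (k ≤ v ∧ (v-k) % (k+1) % 2 = 0 ∧ (v-k) % (k+1) ≤ k-2)) := by
  obtain ⟨t, r, hrk, hv⟩ : ∃ t r, r ≤ k ∧ v = (k+1)*t + r :=
    ⟨v/(k+1), v%(k+1), Nat.lt_succ_iff.mp (Nat.mod_lt v (Nat.succ_pos k)),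
      (Nat.div_add_mod v (k+1)).symm⟩
  have hvm : v % (k+1) = r := by rw [hv, mod_succ_eq _ _ _ hrk]
  rw [hvm]
  rcases Nat.eq_zero_or_pos t with rfl | ht1
  · simp only [Nat.mul_zero, Nat.zero_add] at hv
    have e1 : (v - 1) % (k+1) = v - 1 := Nat.mod_eq_of_lt (by omega)
    have e2 : v - k = 0 := by omega
    rw [e1, e2, Nat.zero_mod]
    omega
  · obtain ⟨s, rfl⟩ : ∃ s, t = s + 1 := ⟨t - 1, by omega⟩
    have hms : (k+1)*(s+1) = (k+1)*s + (k+1) := Nat.mul_succ _ _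
    rcases Nat.eq_zero_or_pos r with rfl | h1
    · have e1 : v - 1 = (k+1)*s + k := by omega
      have e2 : v - k = (k+1)*s + 1 := by omega
      rw [e1, e2, mod_succ_eq _ _ _ le_rfl, mod_succ_eq _ _ _ (by omega)]
      omega
    · have e1 : v - 1 = (k+1)*(s+1) + (r-1) := by omega
      rw [e1, mod_succ_eq _ _ _ (by omega)]
      rcases lt_or_eq_of_le hrk with hlt | heq
      · have e2 : v - k = (k+1)*s + (r+1) := by omega
        rw [e2, mod_succ_eq _ _ _ (by omega)]
        omega
      · have e2 : v - k = (k+1)*(s+1) := by omega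
        rw [e2, Nat.mul_mod_right]
        omega

/-- For a prime `p` and even `k ≥ 1`,
`sift {p, p^k} = {n ∈ ℕ+ : val_p(n) mod (k+1) ∈ {0, 2, 4, …, k-2}}`. -/
theorem sift_p_pk_even (p k : ℕ) (hp : p.Prime) (hk : Even k) (hk0 : 0 < k) :
    sift {p, p ^ k} =
      {n | 0 < n ∧ Even (padicValNat p n % (k + 1)) ∧
        padicValNat p n % (k + 1) ≤ k - 2} := by
  haveI : Fact p.Prime := ⟨hp⟩
  have hk2 : 2 ≤ k := by
    rcases hk with ⟨m, rfl⟩; omega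
  have hkmod : k % 2 = 0 := Nat.even_iff.mp hk
  have hp1 : 1 < p := hp.one_lt
  have hpk1 : 1 < p ^ k := one_lt_pow₀ hp1 (by omega)
  have main : ∀ n : ℕ, siftMem {p, p ^ k} n ↔
      0 < n ∧ (padicValNat p n % (k+1) % 2 = 0 ∧ padicValNat p n % (k+1) ≤ k-2) := by
    intro n
    induction n using Nat.strong_induction_on with
    | _ n ih =>
      rw [siftMem_def]
      rcases Nat.eq_zero_or_pos n with rfl | hn
      · simp
      have hdvd : ∀ a : ℕ, 1 < a →
          ((∃ b, ∃ hb : b < n, siftMem {p, p ^ k} b ∧ n = a * b) ↔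
            (a ∣ n ∧ (0 < n / a ∧ (padicValNat p (n/a) % (k+1) % 2 = 0 ∧
              padicValNat p (n/a) % (k+1) ≤ k-2)))) := by
        intro a ha
        constructor
        · rintro ⟨b, hb, hsb, rfl⟩
          have : a * b / a = b := Nat.mul_div_cancel_left _ (by omega)
          rw [this]
          exact ⟨Dvd.intro b rfl, (ih b hb).mp hsb⟩
        · rintro ⟨⟨b, rfl⟩, hcond⟩
          have : a * b / a = b := Nat.mul_div_cancel_left _ (by omega)
          rw [this] at hcond
          have hb0 : 0 < b := hcond.1
          have hblt : b < a * b := by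
            calc b = 1 * b := (one_mul b).symm
            _ < a * b := (Nat.mul_lt_mul_right hb0).mpr ha
          exact ⟨b, hblt, (ih b hblt).mpr hcond, rfl⟩
      set v := padicValNat p n with hv
      have hdp : p ∣ n ↔ 1 ≤ v := by
        have := hp.pow_dvd_iff_le_factorization (k := 1) (n := n) (by omega)
        rw [Nat.factorization_def n hp] at this
        simpa using this
      have hdpk : p ^ k ∣ n ↔ k ≤ v := by
        have := hp.pow_dvd_iff_le_factorization (k := k) (n := n) (by omega)
        rw [Nat.factorization_def n hp] at this
        exact this
      have hvp : p ∣ n → padicValNat p (n / p) = v - 1 := fun h => padicValNat.div h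
      have hvpk : p ^ k ∣ n → padicValNat p (n / p ^ k) = v - k := fun h =>
        padicValNat.div_pow h
      constructor
      · rintro ⟨-, hno⟩
        refine ⟨hn, ?_⟩
        rw [sift_key k v hkmod hk2]
        rintro (⟨h1, hc⟩ | ⟨h1, hc⟩)
        · refine hno ⟨p, Or.inl rfl, ?_⟩
          rw [hdvd p hp1]
          have hd := hdp.mpr h1
          refine ⟨hd, Nat.div_pos (Nat.le_of_dvd hn hd) (by omega), ?_⟩
          rw [hvp hd]; exact hc
        · refine hno ⟨p ^ k, Or.inr rfl, ?_⟩
          rw [hdvd _ hpk1]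
          have hd := hdpk.mpr h1
          refine ⟨hd, Nat.div_pos (Nat.le_of_dvd hn hd) (by omega), ?_⟩
          rw [hvpk hd]; exact hc
      · rintro ⟨-, hcond⟩
        refine ⟨hn, ?_⟩
        rw [sift_key k v hkmod hk2] at hcond
        rintro ⟨a, ha, hex⟩
        rcases ha with rfl | rfl
        · rw [hdvd _ hp1] at hex
          obtain ⟨hd, -, hc⟩ := hex
          rw [hvp hd] at hc
          exact hcond (Or.inl ⟨hdp.mp hd, hc⟩)
        · rw [hdvd _ hpk1] at hex
          obtain ⟨hd, -, hc⟩ := hex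
          rw [hvpk hd] at hc
          exact hcond (Or.inr ⟨hdpk.mp hd, hc⟩)
  ext n
  simp only [sift, Set.mem_setOf_eq, main n, Nat.even_iff]
end

section
/- Let p and q be distinct primes and let M = sift({p, q}). Then M = {n ∈ ℕ+ : val_p(n) ≡ val_q(n) (mod 2)}. -/
theorem val_flip (p q : ℕ) (hp : p.Prime) (hq : q.Prime) (hpq : p ≠ q) (b : ℕ) (hb : 0 < b) :
    padicValNat p (p * b) = padicValNat p b + 1 ∧ padicValNat q (p * b) = padicValNat q b := by
  haveI := Fact.mk hp
  haveI := Fact.mk hq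
  constructor
  · rw [padicValNat.mul hp.ne_zero hb.ne', padicValNat.self hp.one_lt]
    omega
  · rw [padicValNat.mul hp.ne_zero hb.ne',
      padicValNat.eq_zero_of_not_dvd (mt (Nat.prime_dvd_prime_iff_eq hq hp).mp (Ne.symm hpq)), zero_add]

/-- For distinct primes `p, q`,
`sift {p, q} = {n ∈ ℕ+ : val_p(n) ≡ val_q(n) (mod 2)}`. -/
theorem sift_two_primes (p q : ℕ) (hp : p.Prime) (hq : q.Prime) (hpq : p ≠ q) :
    sift {p, q} = {n | 0 < n ∧ padicValNat p n % 2 = padicValNat q n % 2} := by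
  have key : ∀ n, siftMem {p, q} n ↔
      (0 < n ∧ padicValNat p n % 2 = padicValNat q n % 2) := by
    intro n
    induction n using Nat.strong_induction_on with
    | _ n IH =>
      rw [siftMem_iff]
      constructor
      · rintro ⟨hn, hnd⟩
        refine ⟨hn, ?_⟩
        by_contra hC
        -- some prime divides n
        have hd : p ∣ n ∨ q ∣ n := by
          by_contra h
          push_neg at h
          rw [padicValNat.eq_zero_of_not_dvd h.1, padicValNat.eq_zero_of_not_dvd h.2] at hC
          exact hC rfl
        apply hnd
        rcases hd with ⟨b, rfl⟩ | ⟨b, rfl⟩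
        · have hb : 0 < b := Nat.pos_of_ne_zero (by rintro rfl; simp at hn)
          obtain ⟨h1, h2⟩ := val_flip p q hp hq hpq b hb
          refine ⟨p, Or.inl rfl, b, ?_, ?_, rfl⟩
          · exact lt_mul_left hb hp.one_lt
          · rw [IH b (lt_mul_left hb hp.one_lt)]
            rw [h1, h2] at hC
            exact ⟨hb, by omega⟩
        · have hb : 0 < b := Nat.pos_of_ne_zero (by rintro rfl; simp at hn)
          obtain ⟨h1, h2⟩ := val_flip q p hq hp (Ne.symm hpq) b hb
          refine ⟨q, Or.inr rfl, b, ?_, ?_, rfl⟩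
          · exact lt_mul_left hb hq.one_lt
          · rw [IH b (lt_mul_left hb hq.one_lt)]
            rw [h1, h2] at hC
            exact ⟨hb, by omega⟩
      · rintro ⟨hn, hC⟩
        refine ⟨hn, ?_⟩
        rintro ⟨a, ha, b, hbn, hbs, rfl⟩
        have hb : 0 < b := Nat.pos_of_ne_zero (by rintro rfl; simp at hn)
        rw [IH b hbn] at hbs
        rcases ha with rfl | rfl
        · obtain ⟨h1, h2⟩ := val_flip a q hp hq hpq b hb
          rw [h1, h2] at hC
          omega
        · obtain ⟨h1, h2⟩ := val_flip a p hq hp (Ne.symm hpq) b hb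
          rw [h1, h2] at hC
          omega
  ext n
  exact key n
end

section
/- In the greedy partition γ_d: if d > 2 is odd, then the smallest primitive element of rank one is 3(d+1)/2; if d ≥ 4 is even, then the smallest primitive element of rank one is 3(d+2)/2. -/
lemma greedyPrim_eq_s17 (d n : ℕ) (hn : n ≠ 0) :
    greedyPrim d n = sInf {k | 0 < k ∧ k ∣ n ∧ n / k ≤ d ∧
      ∀ m, m < n → k ≤ m → k ∣ m → greedyPrim d m = k} := by
  rw [greedyPrim, Nat.strongRecOn_eq, if_neg hn]
  rfl

lemma greedyPrim_zero (d : ℕ) : greedyPrim d 0 = 0 := by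
  rw [greedyPrim, Nat.strongRecOn_eq]
  simp

lemma nat_sInf_eq {S : Set ℕ} {k : ℕ} (hk : k ∈ S) (h : ∀ j ∈ S, j < k → False) :
    sInf S = k := by
  have h1 := Nat.sInf_le hk
  have h2 := Nat.sInf_mem (⟨k, hk⟩ : S.Nonempty)
  rcases h1.lt_or_eq with hlt | heq
  · exact (h _ h2 hlt).elim
  · exact heq

lemma greedyPrim_of_le (d : ℕ) : ∀ n, 0 < n → n ≤ d → greedyPrim d n = 1 := by
  intro n
  induction n using Nat.strong_induction_on with
  | _ n ih =>
    intro hn hnd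
    rw [greedyPrim_eq_s17 d n (by omega)]
    have h1 : 1 ∈ {k | 0 < k ∧ k ∣ n ∧ n / k ≤ d ∧
        ∀ m, m < n → k ≤ m → k ∣ m → greedyPrim d m = k} := by
      refine ⟨one_pos, one_dvd _, by simpa using hnd, fun m hm h1m _ => ih m hm (by omega) (by omega)⟩
    refine le_antisymm (Nat.sInf_le h1) ?_
    exact (Nat.sInf_mem (⟨1, h1⟩ : Set.Nonempty _)).1

lemma prim_self (d k : ℕ) (hd : 1 ≤ d) (hk : d < k)
    (hdiv : ∀ k', k' ∣ k → k' < k → k' ≤ d) : greedyPrim d k = k := by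
  have hk0 : 0 < k := by omega
  rw [greedyPrim_eq_s17 d k (by omega)]
  apply nat_sInf_eq
  · exact ⟨hk0, dvd_refl k, by rw [Nat.div_self hk0]; exact hd,
      fun m hm hkm _ => absurd hm (by omega)⟩
  · intro j hj hjk
    obtain ⟨hj0, hjd, hjle, hall⟩ := hj
    by_cases h1 : j = 1
    · subst h1; rw [Nat.div_one] at hjle; omega
    · have h2 := hall j hjk le_rfl dvd_rfl
      have h3 := greedyPrim_of_le d j (by omega) (hdiv j hjd hjk)
      omega

lemma prim_double (d k : ℕ) (hd : 2 ≤ d) (hk : d < k) (hps : greedyPrim d k = k)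
    (hdiv : ∀ k', k' ∣ 2*k → k' < k → k' ≤ d) : greedyPrim d (2*k) = k := by
  have hk0 : 0 < k := by omega
  rw [greedyPrim_eq_s17 d (2*k) (by omega)]
  apply nat_sInf_eq
  · refine ⟨hk0, ⟨2, by ring⟩, ?_, ?_⟩
    · rw [Nat.mul_div_cancel _ hk0]; exact hd
    · intro m hm hkm hdvd
      obtain ⟨j, rfl⟩ := hdvd
      have hj2 : j < 2 := Nat.lt_of_mul_lt_mul_left (a := k) (by omega)
      have hj1 : 1 ≤ j := by
        by_contra h
        have : j = 0 := by omega
        subst this; simp at hkm; omega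
      have : j = 1 := by omega
      subst this; simpa using hps
  · intro j hj hjk
    obtain ⟨hj0, hjd, hjle, hall⟩ := hj
    have hjd' := hdiv j hjd hjk
    by_cases h1 : j = 1
    · subst h1; rw [Nat.div_one] at hjle; omega
    · have h2 := hall j (by omega) le_rfl dvd_rfl
      have h3 := greedyPrim_of_le d j (by omega) hjd'
      omega

/-- bound from a divisor with quotient ≥ 3 -/
lemma bound3 {k' j X : ℕ} (hj : X = k' * j) (h3 : 3 ≤ j) : 3 * k' ≤ X := by
  calc 3 * k' ≤ j * k' := Nat.mul_le_mul_right k' h3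
  _ = k' * j := mul_comm _ _
  _ = X := hj.symm

lemma bound4 {k' j X : ℕ} (hj : X = k' * j) (h4 : 4 ≤ j) : 4 * k' ≤ X := by
  calc 4 * k' ≤ j * k' := Nat.mul_le_mul_right k' h4
  _ = k' * j := mul_comm _ _
  _ = X := hj.symm

section divbounds
variable {d t : ℕ} (hrel : (d = 2*t - 1 ∧ 3 ≤ d) ∨ (d = 2*t - 2 ∧ 4 ≤ d))
include hrel

lemma hA' {k' : ℕ} (hdvd : k' ∣ 3*t) (hlt : k' < 3*t) : k' ≤ d := by
  obtain ⟨j, hj⟩ := hdvd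
  rcases Nat.lt_or_ge j 3 with hj' | hj'
  · interval_cases j <;> omega
  · have := bound3 hj hj'; omega

lemma hC' {k' : ℕ} (hdvd : k' ∣ 4*t) (hlt : k' < 2*t) : k' ≤ d := by
  obtain ⟨j, hj⟩ := hdvd
  rcases Nat.lt_or_ge j 3 with hj' | hj'
  · interval_cases j <;> omega
  · have := bound3 hj hj'; omega

lemma hB' {k k' : ℕ} (_h1 : d < k) (h2 : k < 3*t) (hdvd : k' ∣ 2*k) (hlt : k' < k) :
    k' ≤ d := by
  obtain ⟨j, hj⟩ := hdvd
  rcases Nat.lt_or_ge j 4 with hj' | hj'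
  · interval_cases j <;> omega
  · have := bound4 hj hj'; omega

end divbounds

lemma main_least (d t : ℕ) (hrel : (d = 2*t - 1 ∧ 3 ≤ d) ∨ (d = 2*t - 2 ∧ 4 ≤ d)) :
    IsLeast {k | 0 < k ∧ greedyPrim d k = k ∧ (greedyPart d k).ncard = 1} (3*t) := by
  have hd : 3 ≤ d := by omega
  have hdt : d < 2*t := by omega
  have ht : 2 ≤ t := by omega
  have p2t : greedyPrim d (2*t) = 2*t :=
    prim_self d (2*t) (by omega) hdt
      (fun k' hh hl => hC' hrel (by have := hh.mul_left 2; rwa [show 2*(2*t) = 4*t by ring] at this) hl)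
  have p4t : greedyPrim d (4*t) = 2*t := by
    have := prim_double d (2*t) (by omega) hdt p2t
      (fun k' hh hl => hC' hrel (by rwa [show 2*(2*t) = 4*t by ring] at hh) hl)
    rwa [show 2*(2*t) = 4*t by ring] at this
  have pN : greedyPrim d (3*t) = 3*t :=
    prim_self d (3*t) (by omega) (by omega) (fun k' hh hl => hA' hrel hh hl)
  have prange : ∀ k, d < k → k < 3*t → greedyPrim d k = k := fun k h1 h2 =>
    prim_self d k (by omega) h1 (fun k' hh hl => hB' hrel h1 h2 (hh.mul_left 2) hl)
  have prange2 : ∀ k, d < k → k < 3*t → greedyPrim d (2*k) = k := fun k h1 h2 =>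
    prim_double d k (by omega) h1 (prange k h1 h2) (fun k' hh hl => hB' hrel h1 h2 hh hl)
  have p6t : greedyPrim d (6*t) ≤ 2*t := by
    rw [greedyPrim_eq_s17 d (6*t) (by omega)]
    apply Nat.sInf_le
    refine ⟨by omega, ⟨3, by ring⟩, ?_, ?_⟩
    · rw [show 6*t = 3*(2*t) by ring, Nat.mul_div_cancel _ (by omega : 0 < 2*t)]; exact hd
    · intro m hm hkm hdvd
      obtain ⟨j, rfl⟩ := hdvd
      have hj3 : j < 3 := Nat.lt_of_mul_lt_mul_left (a := 2*t) (by omega)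
      have hj1 : 1 ≤ j := by
        by_contra h
        have : j = 0 := by omega
        subst this; simp at hkm; omega
      interval_cases j
      · simpa using p2t
      · rw [show 2*t*2 = 4*t by ring]; exact p4t
  have hpart : greedyPart d (3*t) = {3*t} := by
    ext m
    simp only [greedyPart, Set.mem_setOf_eq, Set.mem_singleton_iff]
    constructor
    · intro hm
      have hm' := hm
      have hm0 : m ≠ 0 := by
        intro h; rw [h, greedyPrim_zero] at hm; omega
      rw [greedyPrim_eq_s17 d m hm0] at hm
      have hne : Set.Nonempty {k | 0 < k ∧ k ∣ m ∧ m / k ≤ d ∧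
          ∀ m', m' < m → k ≤ m' → k ∣ m' → greedyPrim d m' = k} := by
        by_contra h
        rw [Set.not_nonempty_iff_eq_empty] at h
        rw [h, Nat.sInf_empty] at hm; omega
      have hmem := Nat.sInf_mem hne
      rw [hm] at hmem
      obtain ⟨h0, hdvd, hle, hall⟩ := hmem
      obtain ⟨j, rfl⟩ := hdvd
      have hj1 : 1 ≤ j := by
        by_contra h
        have : j = 0 := by omega
        subst this; simp at hm0
      by_cases hj : j = 1
      · subst hj; ring
      · exfalso
        by_cases hj2 : j = 2
        · subst hj2
          rw [show 3*t*2 = 6*t by ring] at hm'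
          omega
        · have h9 : 3*t*3 ≤ 3*t*j := Nat.mul_le_mul_left (3*t) (by omega)
          have h6 : greedyPrim d (6*t) = 3*t :=
            hall (6*t) (by omega) (by omega) ⟨2, by ring⟩
          omega
    · intro h; subst h; exact pN
  constructor
  · exact ⟨by omega, pN, by rw [hpart]; exact Set.ncard_singleton _⟩
  · intro k hk
    obtain ⟨hk0, hkp, hkn⟩ := hk
    by_contra hlt
    push_neg at hlt
    by_cases hkd : k ≤ d
    · by_cases hk1 : k = 1
      · obtain ⟨a, ha⟩ := Set.ncard_eq_one.mp hkn
        have e1 : (1:ℕ) ∈ greedyPart d k := by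
          show greedyPrim d 1 = k
          rw [hk1]; exact greedyPrim_of_le d 1 one_pos (by omega)
        have e2 : (2:ℕ) ∈ greedyPart d k := by
          show greedyPrim d 2 = k
          rw [hk1]; exact greedyPrim_of_le d 2 (by omega) (by omega)
        rw [ha] at e1 e2
        simp only [Set.mem_singleton_iff] at e1 e2
        omega
      · have := greedyPrim_of_le d k (by omega) hkd
        omega
    · push_neg at hkd
      have h2k := prange2 k hkd hlt
      obtain ⟨a, ha⟩ := Set.ncard_eq_one.mp hkn
      have e1 : k ∈ greedyPart d k := hkp
      have e2 : 2*k ∈ greedyPart d k := h2k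
      rw [ha] at e1 e2
      simp only [Set.mem_singleton_iff] at e1 e2
      omega

/-- In the greedy partition `γ_d`, for odd `d > 2` the smallest primitive of rank one
(i.e. whose part is a singleton) is `3(d+1)/2`; for even `d ≥ 4` it is `3(d+2)/2`. -/
theorem greedy_first_rank_one (d : ℕ) :
    (Odd d → 2 < d →
      IsLeast {k | 0 < k ∧ greedyPrim d k = k ∧ (greedyPart d k).ncard = 1}
        (3 * (d + 1) / 2)) ∧
    (Even d → 4 ≤ d →
      IsLeast {k | 0 < k ∧ greedyPrim d k = k ∧ (greedyPart d k).ncard = 1}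
        (3 * (d + 2) / 2)) := by
  constructor
  · intro hodd hd
    obtain ⟨e, he⟩ := hodd
    have hN : 3 * (d + 1) / 2 = 3 * (e + 1) := by omega
    rw [hN]
    exact main_least d (e+1) (by omega)
  · intro heven hd
    obtain ⟨e, he⟩ := heven
    have hN : 3 * (d + 2) / 2 = 3 * (e + 1) := by omega
    rw [hN]
    exact main_least d (e+1) (by omega)
end
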